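/- arXiv:1604.04437 — 6 statements merged into one kernel-verified Lean document; each statement's English description precedes it below -/
import Mathlib

section
/- With A the quantum complete intersection as below, the Lie algebra L = HH¹(A) has trivial center: Z(L) = {0}. -/
/-!
Write `f x = ∑ a i j • x ^ i * y ^ j` and `f y = ∑ b i j • x ^ i * y ^ j` for a derivation `f`.
Since `[x ^ u * y ^ v, x] = (q ^ v - 1) • x ^ (u + 1) * y ^ v`,
`[x ^ u * y ^ v, y] = (1 - q ^ u) • x ^ u * y ^ (v + 1)` and `q ^ (p - 1) = 1`,
the derivation `f` is inner exactly when `a` and `b` satisfy a short list of linear conditions.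

If the class of `f` is central, its brackets with the grading derivations `x ∂/∂x` and
`y ∂/∂y` are inner. These brackets multiply `a i j` by `1 - i` and `-j`, and `b i j` by `-i`
and `1 - j`, so all the conditions follow except on the weight-zero part
`a 1 0 • x ∂/∂x + b 0 1 • y ∂/∂y`. Because `y ^ (p - 1)` is central, `y ^ (p - 1) x ∂/∂x`
and `y ^ (p - 1) ∂/∂x` are outer derivations, and the brackets of `f` with them are inner
only if `b 0 1 = 0` and then `a 1 0 = 0`.
-/

section HochschildPrelim

variable (k : Type*) [CommRing k] (A : Type*) [Ring A] [Algebra k A]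

attribute [local instance] LieRing.ofAssociativeRing

/-- A derivation of the `k`-algebra `A`: a `k`-linear map satisfying the Leibniz rule. -/
def IsDeriv (f : Module.End k A) : Prop := ∀ a b : A, f (a * b) = a * f b + f a * b

/-- An inner derivation `[c, -] : a ↦ c*a - a*c`. -/
def IsInner (f : Module.End k A) : Prop := ∃ c : A, ∀ a : A, f a = c * a - a * c

/-- The Lie algebra `Der(A)` of derivations, as a Lie subalgebra of `End_k(A)`
(with the commutator bracket). -/
def Der : LieSubalgebra k (Module.End k A) where
  carrier := {f | IsDeriv k A f}
  add_mem' := by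
    intro f g hf hg
    intro a b
    simp only [LinearMap.add_apply, hf a b, hg a b]
    noncomm_ring
  zero_mem' := by intro a b; simp
  smul_mem' := by
    intro c f hf
    intro a b
    simp only [LinearMap.smul_apply, hf a b, smul_add, mul_smul_comm, smul_mul_assoc]
  lie_mem' := by
    intro f g hf hg
    intro a b
    rw [Ring.lie_def]
    simp only [LinearMap.sub_apply, Module.End.mul_apply]
    rw [hg a b, map_add, hf a (g b), hf (g a) b, hf a b, map_add, hg a (f b), hg (f a) b,
      mul_sub, sub_mul]
    abel

/-- The inner derivations form a Lie ideal `IDer(A)` of `Der(A)`. -/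
def IDer : LieIdeal k (Der k A) where
  carrier := {f | IsInner k A f.1}
  add_mem' := by
    rintro f g ⟨c, hc⟩ ⟨d, hd⟩
    refine ⟨c + d, fun a => ?_⟩
    show f.1 a + g.1 a = _
    rw [hc, hd]
    noncomm_ring
  zero_mem' := ⟨0, fun a => by simp⟩
  smul_mem' := by
    rintro t f ⟨c, hc⟩
    refine ⟨t • c, fun a => ?_⟩
    show t • f.1 a = _
    rw [hc, smul_sub, smul_mul_assoc, mul_smul_comm]
  lie_mem := by
    rintro x m ⟨c, hc⟩
    refine ⟨x.1 c, fun a => ?_⟩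
    have hx : IsDeriv k A x.1 := x.2
    have h : (↑(⁅x, m⁆ : Der k A) : Module.End k A) a = x.1 (m.1 a) - m.1 (x.1 a) := rfl
    rw [h, hc, hc, map_sub, hx c a, hx a c]
    abel

/-- The first Hochschild cohomology `HH¹(A) = Der(A)/IDer(A)`, as a quotient Lie algebra. -/
abbrev HH1 := Der k A ⧸ IDer k A

end HochschildPrelim

open Module

section Derivations

variable {k : Type*} [CommRing k] {A : Type*} [Ring A] [Algebra k A]

namespace IsDeriv

variable {f : Module.End k A}

lemma map_one (hf : IsDeriv k A f) : f 1 = 0 := by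
  simpa using hf 1 1

lemma apply_pow_eq {g : Module.End k A} (hf : IsDeriv k A f) (hg : IsDeriv k A g) {a : A}
    (h : f a = g a) (n : ℕ) : f (a ^ n) = g (a ^ n) := by
  induction n with
  | zero => rw [pow_zero, hf.map_one, hg.map_one]
  | succ n ih => rw [pow_succ, hf, hg, ih, h]

lemma of_basis {ι : Type*} (b : Basis ι k A)
    (h : ∀ i j, f (b i * b j) = b i * f (b j) + f (b i) * b j) : IsDeriv k A f := by
  have hleft : ∀ i c, f (b i * c) = b i * f c + f (b i) * c := fun i c => by
    have hext : f ∘ₗ LinearMap.mulLeft k (b i)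
        = LinearMap.mulLeft k (b i) ∘ₗ f + LinearMap.mulLeft k (f (b i)) :=
      b.ext fun j => by simpa using h i j
    simpa using LinearMap.congr_fun hext c
  intro a c
  have hext : f ∘ₗ LinearMap.mulRight k c
      = LinearMap.mulRight k (f c) + LinearMap.mulRight k c ∘ₗ f :=
    b.ext fun i => by simpa using hleft i c
  simpa using LinearMap.congr_fun hext a

lemma mulRight_mul (hf : IsDeriv k A f) {z : A} (hz : ∀ a, Commute a z) :
    IsDeriv k A (LinearMap.mulRight k z * f) := by
  intro a b
  simp only [Module.End.mul_apply, LinearMap.mulRight_apply, hf a b, add_mul, mul_assoc,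
    (hz b).eq]

end IsDeriv

lemma isDeriv_mulLeft_sub_mulRight (c : A) :
    IsDeriv k A (LinearMap.mulLeft k c - LinearMap.mulRight k c) := by
  intro a b
  simp only [LinearMap.sub_apply, LinearMap.mulLeft_apply, LinearMap.mulRight_apply]
  noncomm_ring

variable (k A) in
def IsCentralModInner (f : Module.End k A) : Prop :=
  ∀ g, IsDeriv k A g → IsInner k A (f * g - g * f)

theorem center_HH1_eq_bot_of_isInner
    (h : ∀ f, IsDeriv k A f → IsCentralModInner k A f → IsInner k A f) :
    LieAlgebra.center k (HH1 k A) = ⊥ := by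
  rw [LieSubmodule.eq_bot_iff]
  intro z hz
  obtain ⟨F, rfl⟩ := LieSubmodule.Quotient.surjective_mk' (IDer k A) z
  rw [LieModule.mem_maxTrivSubmodule] at hz
  rw [LieSubmodule.Quotient.mk_eq_zero]
  refine h F F.2 fun g hg => ?_
  have hinner : ⁅(⟨g, hg⟩ : Der k A), F⁆ ∈ IDer k A :=
    LieSubmodule.Quotient.mk_eq_zero'.mp (hz (LieSubmodule.Quotient.mk' _ ⟨g, hg⟩))
  obtain ⟨c, hc⟩ := hinner
  refine ⟨-c, fun a => ?_⟩
  have hbracket : g (F.1 a) - F.1 (g a) = c * a - a * c := hc a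
  simp only [LinearMap.sub_apply, Module.End.mul_apply]
  rw [← neg_sub, hbracket]
  noncomm_ring

end Derivations

namespace CharP

variable {R : Type*} [AddGroupWithOne R] {p : ℕ} [CharP R p]

lemma natCast_inj_of_lt {i j : ℕ} (hi : i < p) (hj : j < p) : (i : R) = j ↔ i = j :=
  ⟨fun h => ((CharP.natCast_eq_natCast R p).mp h).eq_of_lt_of_lt hi hj, congrArg _⟩

lemma natCast_ne_zero_of_lt {i : ℕ} (h0 : i ≠ 0) (hi : i < p) : (i : R) ≠ 0 := by
  simpa using (natCast_inj_of_lt (R := R) hi (by omega : 0 < p)).not.mpr h0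

lemma one_sub_natCast_ne_zero_of_lt (hp : 1 < p) {i : ℕ} (h1 : i ≠ 1) (hi : i < p) :
    (1 - i : R) ≠ 0 := by
  rw [sub_ne_zero, ne_comm, ← Nat.cast_one, Ne, natCast_inj_of_lt hi hp]
  exact h1

end CharP

structure QuantumCompleteIntersection (k : Type*) [CommRing k] (A : Type*) [Ring A]
    [Algebra k A] (p : ℕ) (q : k) where
  x : A
  y : A
  x_pow : x ^ p = 0
  y_pow : y ^ p = 0
  y_mul_x : y * x = q • (x * y)
  basis : Basis (Fin p × Fin p) k A
  basis_apply : ∀ ij : Fin p × Fin p, basis ij = x ^ (ij.1 : ℕ) * y ^ (ij.2 : ℕ)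

namespace QuantumCompleteIntersection

section CommRing

variable {k : Type*} [CommRing k] {A : Type*} [Ring A] [Algebra k A] {p : ℕ} {q : k}
  (S : QuantumCompleteIntersection k A p q)

def monomial (i j : ℕ) : A := S.x ^ i * S.y ^ j

lemma monomial_eq_zero {i j : ℕ} (h : p ≤ i ∨ p ≤ j) : S.monomial i j = 0 := by
  rcases h with h | h
  · rw [monomial, ← Nat.sub_add_cancel h, pow_add, S.x_pow, mul_zero, zero_mul]
  · rw [monomial, ← Nat.sub_add_cancel h, pow_add, S.y_pow, mul_zero, mul_zero]

lemma monomial_eq_basis {i j : ℕ} (hi : i < p) (hj : j < p) :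
    S.monomial i j = S.basis (⟨i, hi⟩, ⟨j, hj⟩) :=
  (S.basis_apply (⟨i, hi⟩, ⟨j, hj⟩)).symm

lemma y_mul_x_pow (i : ℕ) : S.y * S.x ^ i = q ^ i • (S.x ^ i * S.y) := by
  induction i with
  | zero => simp
  | succ n ih =>
    rw [pow_succ, ← mul_assoc, ih, smul_mul_assoc, mul_assoc, S.y_mul_x, mul_smul_comm,
      smul_smul, ← mul_assoc, ← pow_succ, ← pow_succ]

lemma y_pow_mul_x_pow (i j : ℕ) : S.y ^ j * S.x ^ i = q ^ (i * j) • (S.x ^ i * S.y ^ j) := by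
  induction j with
  | zero => simp
  | succ n ih =>
    rw [pow_succ, mul_assoc, S.y_mul_x_pow, mul_smul_comm, ← mul_assoc, ih, smul_mul_assoc,
      smul_smul, mul_assoc, ← pow_succ, ← pow_add]
    congr 2
    ring

lemma monomial_mul (i j u v : ℕ) :
    S.monomial i j * S.monomial u v = q ^ (j * u) • S.monomial (i + u) (j + v) := by
  rw [monomial, monomial, mul_assoc, ← mul_assoc (S.y ^ j), S.y_pow_mul_x_pow, smul_mul_assoc,
    mul_smul_comm, monomial, pow_add, pow_add, mul_comm u j, ← mul_assoc, ← mul_assoc,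
    mul_assoc (S.x ^ i)]
  simp only [mul_assoc]

lemma x_eq_monomial : S.x = S.monomial 1 0 := by simp [monomial]

lemma y_pow_eq_monomial (m : ℕ) : S.y ^ m = S.monomial 0 m := by simp [monomial]

lemma y_eq_monomial : S.y = S.monomial 0 1 := by simp [monomial]

lemma commute_y_pow (hq : q ^ (p - 1) = 1) (a : A) : Commute a (S.y ^ (p - 1)) := by
  have hmul : LinearMap.mulRight k (S.y ^ (p - 1)) = LinearMap.mulLeft k (S.y ^ (p - 1)) :=
    S.basis.ext fun ij => by
      rw [LinearMap.mulRight_apply, LinearMap.mulLeft_apply, S.basis_apply,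
        ← mul_assoc (S.y ^ (p - 1)), S.y_pow_mul_x_pow, pow_mul', hq, one_pow, one_smul,
        mul_assoc, mul_assoc, ← pow_add, ← pow_add, add_comm (p - 1)]
  exact LinearMap.congr_fun hmul a

/-- The coefficient of `x ^ i * y ^ j`, extended by zero outside `i, j < p`. -/
noncomputable def coef (i j : ℕ) : A →ₗ[k] k :=
  if h : i < p ∧ j < p then S.basis.coord (⟨i, h.1⟩, ⟨j, h.2⟩) else 0

lemma coef_eq_zero {i j : ℕ} (h : p ≤ i ∨ p ≤ j) (z : A) : S.coef i j z = 0 := by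
  rw [coef, dif_neg (by omega), LinearMap.zero_apply]

lemma coef_monomial (u v i j : ℕ) :
    S.coef i j (S.monomial u v) = if u = i ∧ v = j ∧ i < p ∧ j < p then 1 else 0 := by
  by_cases hij : i < p ∧ j < p
  · by_cases huv : u < p ∧ v < p
    · rw [S.monomial_eq_basis huv.1 huv.2, coef, dif_pos hij, Basis.coord_apply,
        Basis.repr_self, Finsupp.single_apply]
      simp only [Prod.ext_iff, Fin.ext_iff, hij, and_true]
    · rw [S.monomial_eq_zero (by omega), map_zero, if_neg (by omega)]
  · rw [S.coef_eq_zero (by omega), if_neg (by tauto)]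

lemma ext_coef {z w : A} (h : ∀ i j, i < p → j < p → S.coef i j z = S.coef i j w) : z = w :=
  S.basis.ext_elem fun ij => by
    simpa [coef, Basis.coord_apply] using h ij.1 ij.2 ij.1.isLt ij.2.isLt

lemma linearMap_ext {M : Type*} [AddCommGroup M] [Module k M] {L L' : A →ₗ[k] M}
    (h : ∀ u v, u < p → v < p → L (S.monomial u v) = L' (S.monomial u v)) : L = L' :=
  S.basis.ext fun ij => by simpa [S.basis_apply, monomial] using h ij.1 ij.2 ij.1.isLt ij.2.isLt

section MonomialMaps

variable {T : Module.End k A} {d : ℕ → ℕ → k} {s t : ℕ → ℕ → ℕ}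

lemma coef_apply_of_monomial
    (hT : ∀ u v, u < p → v < p → T (S.monomial u v) = d u v • S.monomial (s u v) (t u v))
    {i j u₀ v₀ : ℕ} (hi : i < p) (hj : j < p) (hu₀ : u₀ < p) (hv₀ : v₀ < p)
    (hs : s u₀ v₀ = i) (ht : t u₀ v₀ = j)
    (huniq : ∀ u v, u < p → v < p → s u v = i → t u v = j → d u v ≠ 0 → u = u₀ ∧ v = v₀)
    (z : A) : S.coef i j (T z) = d u₀ v₀ * S.coef u₀ v₀ z := by
  have hcomp : S.coef i j ∘ₗ T = d u₀ v₀ • S.coef u₀ v₀ := S.linearMap_ext fun u v hu hv => by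
    rw [LinearMap.comp_apply, LinearMap.smul_apply, hT u v hu hv, map_smul, S.coef_monomial,
      S.coef_monomial, smul_eq_mul, smul_eq_mul]
    by_cases huv : u = u₀ ∧ v = v₀
    · obtain ⟨rfl, rfl⟩ := huv
      simp [hs, ht, hi, hj, hu₀, hv₀]
    · rw [if_neg (show ¬(u = u₀ ∧ v = v₀ ∧ u₀ < p ∧ v₀ < p) by tauto), mul_zero]
      by_cases hd : d u v = 0
      · rw [hd, zero_mul]
      · rw [if_neg fun h => huv (huniq u v hu hv h.1 h.2.1 hd), mul_zero]
  exact LinearMap.congr_fun hcomp z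

lemma coef_apply_eq_zero_of_monomial
    (hT : ∀ u v, u < p → v < p → T (S.monomial u v) = d u v • S.monomial (s u v) (t u v))
    {i j : ℕ} (hnone : ∀ u v, u < p → v < p → s u v = i → t u v = j → d u v = 0)
    (z : A) : S.coef i j (T z) = 0 := by
  have hcomp : S.coef i j ∘ₗ T = 0 := S.linearMap_ext fun u v hu hv => by
    rw [LinearMap.comp_apply, LinearMap.zero_apply, hT u v hu hv, map_smul, S.coef_monomial,
      smul_eq_mul]
    by_cases h : s u v = i ∧ t u v = j
    · rw [hnone u v hu hv h.1 h.2, zero_mul]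
    · rw [if_neg (by tauto), mul_zero]
  exact LinearMap.congr_fun hcomp z

lemma isDeriv_of_monomial
    (h : ∀ u v u' v', T (S.monomial u v * S.monomial u' v')
      = S.monomial u v * T (S.monomial u' v') + T (S.monomial u v) * S.monomial u' v') :
    IsDeriv k A T :=
  IsDeriv.of_basis S.basis fun ij ij' => by simpa only [S.basis_apply, monomial] using h _ _ _ _

end MonomialMaps

lemma coef_mul_y_pow (z : A) {i j m : ℕ} (hjm : j + m < p) :
    S.coef i (j + m) (z * S.y ^ m) = S.coef i j z := by
  by_cases hi : i < p
  · simpa using S.coef_apply_of_monomial (T := LinearMap.mulRight k (S.y ^ m))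
      (d := fun _ _ => 1) (s := fun u _ => u) (t := fun _ v => v + m)
      (fun u v _ _ => by simp [S.y_pow_eq_monomial, S.monomial_mul])
      hi hjm hi (by omega) rfl rfl (fun u v _ _ hu hv _ => ⟨hu, by omega⟩) z
  · rw [S.coef_eq_zero (by omega), S.coef_eq_zero (by omega)]

lemma coef_x_mul (z : A) {i j : ℕ} (hi : i + 1 < p) :
    S.coef (i + 1) j (S.x * z) = S.coef i j z := by
  by_cases hj : j < p
  · simpa using S.coef_apply_of_monomial (T := LinearMap.mulLeft k S.x)
      (d := fun _ _ => 1) (s := fun u _ => u + 1) (t := fun _ v => v)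
      (fun u v _ _ => by simp [S.x_eq_monomial, S.monomial_mul, add_comm])
      hi hj (by omega) hj rfl rfl (fun u v _ _ hu hv _ => ⟨by omega, hv⟩) z
  · rw [S.coef_eq_zero (by omega), S.coef_eq_zero (by omega)]

lemma coef_y_pow_mul (z : A) {i j m : ℕ} (hjm : j + m < p) :
    S.coef i (j + m) (S.y ^ m * z) = q ^ (m * i) * S.coef i j z := by
  by_cases hi : i < p
  · exact S.coef_apply_of_monomial (T := LinearMap.mulLeft k (S.y ^ m))
      (d := fun u _ => q ^ (m * u)) (s := fun u _ => u) (t := fun _ v => v + m)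
      (fun u v _ _ => by simp [S.y_pow_eq_monomial, S.monomial_mul, add_comm])
      hi hjm hi (by omega) rfl rfl (fun u v _ _ hu hv _ => ⟨hu, by omega⟩) z
  · rw [S.coef_eq_zero (by omega), S.coef_eq_zero (by omega), mul_zero]

lemma monomial_mul_x_sub_x_mul_monomial (u v : ℕ) :
    S.monomial u v * S.x - S.x * S.monomial u v = (q ^ v - 1) • S.monomial (u + 1) v := by
  simp [S.x_eq_monomial, S.monomial_mul, sub_smul, add_comm]

lemma monomial_mul_y_sub_y_mul_monomial (u v : ℕ) :
    S.monomial u v * S.y - S.y * S.monomial u v = (1 - q ^ u) • S.monomial u (v + 1) := by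
  simp [S.y_eq_monomial, S.monomial_mul, sub_smul, add_comm]

lemma coef_comm_x_zero (c : A) (j : ℕ) : S.coef 0 j (c * S.x - S.x * c) = 0 :=
  S.coef_apply_eq_zero_of_monomial (T := LinearMap.mulRight k S.x - LinearMap.mulLeft k S.x)
    (fun u v _ _ => S.monomial_mul_x_sub_x_mul_monomial u v) (fun _ _ _ _ h => by omega) c

lemma coef_comm_x_succ (c : A) {i j : ℕ} (hi : i + 1 < p) :
    S.coef (i + 1) j (c * S.x - S.x * c) = (q ^ j - 1) * S.coef i j c := by
  by_cases hj : j < p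
  · exact S.coef_apply_of_monomial (T := LinearMap.mulRight k S.x - LinearMap.mulLeft k S.x)
      (fun u v _ _ => S.monomial_mul_x_sub_x_mul_monomial u v)
      hi hj (by omega) hj rfl rfl (fun u v _ _ hu hv _ => ⟨by omega, hv⟩) c
  · rw [S.coef_eq_zero (by omega), S.coef_eq_zero (by omega), mul_zero]

lemma coef_comm_y_zero (c : A) (i : ℕ) : S.coef i 0 (c * S.y - S.y * c) = 0 :=
  S.coef_apply_eq_zero_of_monomial (T := LinearMap.mulRight k S.y - LinearMap.mulLeft k S.y)
    (fun u v _ _ => S.monomial_mul_y_sub_y_mul_monomial u v) (fun _ _ _ _ _ h => by omega) c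

lemma coef_comm_y_succ (c : A) {i j : ℕ} (hj : j + 1 < p) :
    S.coef i (j + 1) (c * S.y - S.y * c) = (1 - q ^ i) * S.coef i j c := by
  by_cases hi : i < p
  · exact S.coef_apply_of_monomial (T := LinearMap.mulRight k S.y - LinearMap.mulLeft k S.y)
      (fun u v _ _ => S.monomial_mul_y_sub_y_mul_monomial u v)
      hi hj hi (by omega) rfl rfl (fun u v _ _ hu hv _ => ⟨hu, by omega⟩) c
  · rw [S.coef_eq_zero (by omega), S.coef_eq_zero (by omega), mul_zero]

/-- The grading derivation `α x ∂/∂x + β y ∂/∂y`. -/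
noncomputable def euler (α β : k) : Module.End k A :=
  S.basis.constr k fun ij => (α * ij.1 + β * ij.2) • S.monomial ij.1 ij.2

lemma euler_monomial (α β : k) (u v : ℕ) :
    S.euler α β (S.monomial u v) = (α * u + β * v) • S.monomial u v := by
  by_cases h : u < p ∧ v < p
  · rw [S.monomial_eq_basis h.1 h.2, euler, Basis.constr_basis, ← S.monomial_eq_basis]
  · rw [S.monomial_eq_zero (by omega), map_zero, smul_zero]

lemma isDeriv_euler (α β : k) : IsDeriv k A (S.euler α β) :=
  S.isDeriv_of_monomial fun u v u' v' => by
    rw [S.monomial_mul, map_smul, S.euler_monomial, S.euler_monomial, S.euler_monomial,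
      mul_smul_comm, smul_mul_assoc, S.monomial_mul, smul_smul, smul_smul, smul_smul, ← add_smul]
    congr 1
    push_cast
    ring

lemma euler_x (α β : k) : S.euler α β S.x = α • S.x := by
  simp [S.x_eq_monomial, S.euler_monomial]

lemma euler_y (α β : k) : S.euler α β S.y = β • S.y := by
  simp [S.y_eq_monomial, S.euler_monomial]

lemma coef_euler (α β : k) (z : A) (i j : ℕ) :
    S.coef i j (S.euler α β z) = (α * i + β * j) * S.coef i j z := by
  by_cases hij : i < p ∧ j < p
  · exact S.coef_apply_of_monomial (fun u v _ _ => S.euler_monomial α β u v)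
      hij.1 hij.2 hij.1 hij.2 rfl rfl (fun u v _ _ hu hv _ => ⟨hu, hv⟩) z
  · rw [S.coef_eq_zero (by omega), S.coef_eq_zero (by omega), mul_zero]

/-- The derivation `y ^ (p - 1) ∂/∂x`. -/
noncomputable def yTopDerivX : Module.End k A :=
  S.basis.constr k fun ij => (ij.1 : k) • S.monomial (ij.1 - 1) (ij.2 + (p - 1))

lemma yTopDerivX_monomial [CharP k p] (u v : ℕ) :
    S.yTopDerivX (S.monomial u v) = (u : k) • S.monomial (u - 1) (v + (p - 1)) := by
  by_cases h : u < p ∧ v < p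
  · rw [S.monomial_eq_basis h.1 h.2, yTopDerivX, Basis.constr_basis]
  · rw [S.monomial_eq_zero (by omega), map_zero]
    rcases lt_trichotomy u p with hu | rfl | hu
    · rw [S.monomial_eq_zero (by omega), smul_zero]
    · rw [CharP.cast_eq_zero, zero_smul]
    · rw [S.monomial_eq_zero (by omega), smul_zero]

lemma natCast_smul_monomial_add_sub_one (a b w : ℕ) :
    (b : k) • S.monomial (a + (b - 1)) w = (b : k) • S.monomial (a + b - 1) w := by
  rcases b with _ | b <;> simp

lemma isDeriv_yTopDerivX [CharP k p] (hq : q ^ (p - 1) = 1) : IsDeriv k A S.yTopDerivX :=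
  S.isDeriv_of_monomial fun u v u' v' => by
    rw [S.monomial_mul, map_smul, S.yTopDerivX_monomial, S.yTopDerivX_monomial,
      S.yTopDerivX_monomial, mul_smul_comm, smul_mul_assoc, S.monomial_mul, S.monomial_mul]
    by_cases hv : v = 0 ∧ v' = 0
    · obtain ⟨rfl, rfl⟩ := hv
      simp only [zero_add, add_zero, zero_mul, pow_zero, one_smul, pow_mul, hq, one_pow]
      rw [S.natCast_smul_monomial_add_sub_one u u', add_comm (u - 1) u',
        S.natCast_smul_monomial_add_sub_one u' u, add_comm u' u, ← add_smul, Nat.cast_add,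
        add_comm (u' : k)]
    · have hzero : ∀ a b, p ≤ b → S.monomial a b = 0 := fun a b hb =>
        S.monomial_eq_zero (Or.inr hb)
      rw [hzero _ _ (by omega), hzero _ _ (by omega), hzero _ _ (by omega)]
      simp

lemma yTopDerivX_x [CharP k p] : S.yTopDerivX S.x = S.y ^ (p - 1) := by
  simp [S.x_eq_monomial, S.yTopDerivX_monomial, S.y_pow_eq_monomial]

lemma coef_yTopDerivX [CharP k p] (hp : 1 < p) (z : A) :
    S.coef 0 (p - 1) (S.yTopDerivX z) = S.coef 1 0 z := by
  simpa using S.coef_apply_of_monomial (fun u v _ _ => S.yTopDerivX_monomial u v)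
    (i := 0) (j := p - 1) (u₀ := 1) (v₀ := 0) (by omega) (by omega) hp (by omega) rfl (by simp)
    (fun u v _ _ hu hv hd => ⟨by rcases u with _ | u <;> simp_all, by omega⟩) z

/-- The linear conditions on the coefficients of `(f x, f y)` that cut out the inner
derivations `f = [c, -]`. -/
structure InnerCoeffs (w₁ w₂ : A) : Prop where
  coef_x_zero : ∀ j, S.coef 0 j w₁ = 0
  coef_x_of_pow_eq_one : ∀ i j, q ^ j = 1 → S.coef i j w₁ = 0
  coef_y_zero : ∀ i, S.coef i 0 w₂ = 0
  coef_y_of_pow_eq_one : ∀ i j, q ^ i = 1 → S.coef i j w₂ = 0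
  compat : ∀ i j, (1 - q ^ i) * S.coef (i + 1) j w₁ = (q ^ j - 1) * S.coef i (j + 1) w₂

lemma pow_sub_one_mul_coef_eq_zero (hq : q ^ (p - 1) = 1) (c : A) {i j : ℕ} (hj : p ≤ j + 1) :
    (q ^ j - 1) * S.coef i j c = 0 := by
  rcases eq_or_lt_of_le hj with hj | hj
  · rw [show j = p - 1 by omega, hq, sub_self, zero_mul]
  · rw [S.coef_eq_zero (by omega), mul_zero]

lemma one_sub_pow_mul_coef_eq_zero (hq : q ^ (p - 1) = 1) (c : A) {i j : ℕ} (hi : p ≤ i + 1) :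
    (1 - q ^ i) * S.coef i j c = 0 := by
  rcases eq_or_lt_of_le hi with hi | hi
  · rw [show i = p - 1 by omega, hq, sub_self, zero_mul]
  · rw [S.coef_eq_zero (by omega), mul_zero]

lemma innerCoeffs_comm (hq : q ^ (p - 1) = 1) (c : A) :
    S.InnerCoeffs (c * S.x - S.x * c) (c * S.y - S.y * c) where
  coef_x_zero := S.coef_comm_x_zero c
  coef_x_of_pow_eq_one := by
    rintro (_ | i) j hqj
    · exact S.coef_comm_x_zero c j
    · by_cases hi : i + 1 < p
      · rw [S.coef_comm_x_succ c hi, hqj, sub_self, zero_mul]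
      · exact S.coef_eq_zero (by omega) _
  coef_y_zero := S.coef_comm_y_zero c
  coef_y_of_pow_eq_one := by
    rintro i (_ | j) hqi
    · exact S.coef_comm_y_zero c i
    · by_cases hj : j + 1 < p
      · rw [S.coef_comm_y_succ c hj, hqi, sub_self, zero_mul]
      · exact S.coef_eq_zero (by omega) _
  compat i j := by
    by_cases hi : i + 1 < p
    · rw [S.coef_comm_x_succ c hi]
      by_cases hj : j + 1 < p
      · rw [S.coef_comm_y_succ c hj]
        ring
      · rw [S.coef_eq_zero (i := i) (j := j + 1) (Or.inr (by omega)), mul_zero,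
          S.pow_sub_one_mul_coef_eq_zero hq c (by omega), mul_zero]
    · rw [S.coef_eq_zero (i := i + 1) (j := j) (Or.inl (by omega)), mul_zero]
      by_cases hj : j + 1 < p
      · rw [S.coef_comm_y_succ c hj, S.one_sub_pow_mul_coef_eq_zero hq c (by omega), mul_zero]
      · rw [S.coef_eq_zero (i := i) (j := j + 1) (Or.inr (by omega)), mul_zero]

lemma innerCoeffs_of_isInner (hq : q ^ (p - 1) = 1) {g : Module.End k A}
    (hg : IsInner k A g) : S.InnerCoeffs (g S.x) (g S.y) := by
  obtain ⟨c, hc⟩ := hg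
  rw [hc, hc]
  exact S.innerCoeffs_comm hq c

lemma ext_of_isDeriv {f g : Module.End k A} (hf : IsDeriv k A f) (hg : IsDeriv k A g)
    (hx : f S.x = g S.x) (hy : f S.y = g S.y) : f = g :=
  S.linearMap_ext fun u v _ _ => by
    rw [monomial, hf, hg, hf.apply_pow_eq hg hx, hf.apply_pow_eq hg hy]

variable {f : Module.End k A}

lemma coef_apply_y_pow (hf : IsDeriv k A f) {m : ℕ} (hm : m < p) :
    S.coef 0 m (f (S.y ^ m)) = m * S.coef 0 1 (f S.y) := by
  induction m with
  | zero => simp [hf.map_one]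
  | succ n ih =>
    have hleft := S.coef_y_pow_mul (f S.y) (i := 0) (j := 1) (m := n) (by omega)
    have hright := S.coef_mul_y_pow (f (S.y ^ n)) (i := 0) (m := 1) hm
    rw [add_comm 1 n, mul_zero, pow_zero, one_mul] at hleft
    rw [pow_one] at hright
    rw [pow_succ, hf, map_add, hleft, hright, ih (by omega)]
    push_cast
    ring

lemma coef_comm_euler_x (α β : k) (i j : ℕ) :
    S.coef i j ((f * S.euler α β - S.euler α β * f) S.x)
      = (α * (1 - i) - β * j) * S.coef i j (f S.x) := by
  simp only [LinearMap.sub_apply, Module.End.mul_apply, S.euler_x, map_smul, map_sub,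
    S.coef_euler, smul_eq_mul]
  ring

lemma coef_comm_euler_y (α β : k) (i j : ℕ) :
    S.coef i j ((f * S.euler α β - S.euler α β * f) S.y)
      = (β * (1 - j) - α * i) * S.coef i j (f S.y) := by
  simp only [LinearMap.sub_apply, Module.End.mul_apply, S.euler_y, map_smul, map_sub,
    S.coef_euler, smul_eq_mul]
  ring

end CommRing

section Field

variable {k : Type*} [Field k] {A : Type*} [Ring A] [Algebra k A] {p : ℕ} {q : k}
  (S : QuantumCompleteIntersection k A p q)

lemma coef_eq_zero_of_mul_eq_zero {a : k} {i j : ℕ} {z : A} (h : a * S.coef i j z = 0)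
    (ha : i < p → j < p → a ≠ 0) : S.coef i j z = 0 := by
  by_cases hij : i < p ∧ j < p
  · exact (mul_eq_zero.mp h).resolve_left (ha hij.1 hij.2)
  · exact S.coef_eq_zero (by omega) z

lemma isInner_of_innerCoeffs {f : Module.End k A} (hf : IsDeriv k A f)
    (h : S.InnerCoeffs (f S.x) (f S.y)) : IsInner k A f := by
  classical
  -- Where also `q ^ i = 1` this divides by zero, harmlessly: such a coefficient of `c`
  -- contributes neither to `c * x - x * c` nor to `c * y - y * c`.
  let a : ℕ → ℕ → k := fun i j => if q ^ j ≠ 1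
    then S.coef (i + 1) j (f S.x) / (q ^ j - 1) else S.coef i (j + 1) (f S.y) / (1 - q ^ i)
  let c : A := S.basis.equivFun.symm fun ij => a ij.1 ij.2
  have hc : ∀ i j, i < p → j < p → S.coef i j c = a i j := fun i j hi hj => by
    rw [coef, dif_pos ⟨hi, hj⟩, Basis.coord_apply, ← Basis.equivFun_apply,
      LinearEquiv.apply_symm_apply]
  have hx : f S.x = c * S.x - S.x * c := S.ext_coef fun i j hi hj => by
    rcases i with _ | i
    · rw [h.coef_x_zero, S.coef_comm_x_zero]
    · rw [S.coef_comm_x_succ c hi, hc i j (by omega) hj]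
      by_cases hqj : q ^ j = 1
      · rw [h.coef_x_of_pow_eq_one _ _ hqj, hqj, sub_self, zero_mul]
      · simp only [a, if_pos hqj, mul_div_cancel₀ _ (sub_ne_zero.mpr hqj)]
  have hy : f S.y = c * S.y - S.y * c := S.ext_coef fun i j hi hj => by
    rcases j with _ | j
    · rw [h.coef_y_zero, S.coef_comm_y_zero]
    · rw [S.coef_comm_y_succ c hj, hc i j hi (by omega)]
      by_cases hqi : q ^ i = 1
      · rw [h.coef_y_of_pow_eq_one _ _ hqi, hqi, sub_self, zero_mul]
      have hqi' : 1 - q ^ i ≠ 0 := sub_ne_zero.mpr (Ne.symm hqi)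
      by_cases hqj : q ^ j = 1
      · simp only [a, hqj, ne_eq, not_true_eq_false, if_false, mul_div_cancel₀ _ hqi']
      · simp only [a, if_pos hqj]
        rw [mul_div_assoc', h.compat, mul_div_cancel_left₀ _ (sub_ne_zero.mpr hqj)]
  refine ⟨c, fun z => ?_⟩
  have hfc : f = LinearMap.mulLeft k c - LinearMap.mulRight k c :=
    S.ext_of_isDeriv hf (isDeriv_mulLeft_sub_mulRight c) (by simpa using hx) (by simpa using hy)
  simp [hfc]

variable {f : Module.End k A}

lemma coef_y_zero_one_eq_zero_of_central [CharP k p] (hp : 1 < p) (hq : q ^ (p - 1) = 1)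
    (hf : IsDeriv k A f) (hc : IsCentralModInner k A f) :
    S.coef 0 1 (f S.y) = 0 := by
  let G := LinearMap.mulRight k (S.y ^ (p - 1)) * S.euler 1 0
  have hG : IsDeriv k A G := (S.isDeriv_euler 1 0).mulRight_mul (S.commute_y_pow hq)
  have h0 := (S.innerCoeffs_of_isInner hq (hc G hG)).coef_x_of_pow_eq_one 1 (p - 1) hq
  have hcomm : (f * G - G * f) S.x
      = S.x * f (S.y ^ (p - 1)) + (f S.x - S.euler 1 0 (f S.x)) * S.y ^ (p - 1) := by
    simp only [G, LinearMap.sub_apply, Module.End.mul_apply, LinearMap.mulRight_apply,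
      S.euler_x, one_smul, hf S.x, sub_mul]
    abel
  have hright := S.coef_mul_y_pow (f S.x - S.euler 1 0 (f S.x)) (i := 1) (j := 0) (m := p - 1)
    (by omega)
  rw [zero_add] at hright
  rw [hcomm, map_add, S.coef_x_mul _ (i := 0) hp, S.coef_apply_y_pow hf (by omega), hright,
    map_sub, S.coef_euler] at h0
  simp only [Nat.cast_one, mul_one, Nat.cast_zero, mul_zero, add_zero, one_mul, sub_self] at h0
  exact (mul_eq_zero.mp h0).resolve_left (CharP.natCast_ne_zero_of_lt (by omega) (by omega))

lemma coef_x_one_zero_eq_zero_of_central [CharP k p] (hp : 1 < p) (hq : q ^ (p - 1) = 1)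
    (hf : IsDeriv k A f) (hc : IsCentralModInner k A f) :
    S.coef 1 0 (f S.x) = 0 := by
  have h0 := (S.innerCoeffs_of_isInner hq (hc _ (S.isDeriv_yTopDerivX hq))).coef_x_zero (p - 1)
  rwa [LinearMap.sub_apply, Module.End.mul_apply, Module.End.mul_apply, S.yTopDerivX_x, map_sub,
    S.coef_apply_y_pow hf (by omega), S.coef_y_zero_one_eq_zero_of_central hp hq hf hc,
    S.coef_yTopDerivX hp, mul_zero, zero_sub, neg_eq_zero] at h0

lemma coef_y_of_pow_eq_one_of_central [CharP k p] (hp : 1 < p) (hq : q ^ (p - 1) = 1)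
    (hf : IsDeriv k A f) (hc : IsCentralModInner k A f) {i j : ℕ} (hqi : q ^ i = 1) :
    S.coef i j (f S.y) = 0 := by
  rcases eq_or_ne i 0 with rfl | hi0
  · rcases eq_or_ne j 1 with rfl | hj1
    · exact S.coef_y_zero_one_eq_zero_of_central hp hq hf hc
    · have h := (S.innerCoeffs_of_isInner hq (hc _ (S.isDeriv_euler 0 1))).coef_y_of_pow_eq_one
        0 j hqi
      rw [S.coef_comm_euler_y] at h
      exact S.coef_eq_zero_of_mul_eq_zero h fun _ hj => by
        simpa using CharP.one_sub_natCast_ne_zero_of_lt hp hj1 hj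
  · have h := (S.innerCoeffs_of_isInner hq (hc _ (S.isDeriv_euler 1 0))).coef_y_of_pow_eq_one
      i j hqi
    rw [S.coef_comm_euler_y] at h
    exact S.coef_eq_zero_of_mul_eq_zero h fun hi _ => by
      simpa using CharP.natCast_ne_zero_of_lt hi0 hi

lemma coef_x_of_pow_eq_one_of_central [CharP k p] (hp : 1 < p) (hq : q ^ (p - 1) = 1)
    (hf : IsDeriv k A f) (hc : IsCentralModInner k A f) {i j : ℕ} (hqj : q ^ j = 1) :
    S.coef i j (f S.x) = 0 := by
  rcases eq_or_ne i 1 with rfl | hi1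
  · rcases eq_or_ne j 0 with rfl | hj0
    · exact S.coef_x_one_zero_eq_zero_of_central hp hq hf hc
    · have h := (S.innerCoeffs_of_isInner hq (hc _ (S.isDeriv_euler 0 1))).coef_x_of_pow_eq_one
        1 j hqj
      rw [S.coef_comm_euler_x] at h
      exact S.coef_eq_zero_of_mul_eq_zero h fun _ hj => by
        simpa using CharP.natCast_ne_zero_of_lt hj0 hj
  · have h := (S.innerCoeffs_of_isInner hq (hc _ (S.isDeriv_euler 1 0))).coef_x_of_pow_eq_one
      i j hqj
    rw [S.coef_comm_euler_x] at h
    exact S.coef_eq_zero_of_mul_eq_zero h fun hi _ => by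
      simpa using CharP.one_sub_natCast_ne_zero_of_lt hp hi1 hi

lemma innerCoeffs_of_central [CharP k p] (hp : 1 < p) (hq : q ^ (p - 1) = 1)
    (hf : IsDeriv k A f) (hc : IsCentralModInner k A f) :
    S.InnerCoeffs (f S.x) (f S.y) where
  coef_x_zero j := by
    have h := (S.innerCoeffs_of_isInner hq (hc _ (S.isDeriv_euler 1 0))).coef_x_zero j
    rw [S.coef_comm_euler_x] at h
    simpa using h
  coef_x_of_pow_eq_one _ _ := S.coef_x_of_pow_eq_one_of_central hp hq hf hc
  coef_y_zero i := by
    have h := (S.innerCoeffs_of_isInner hq (hc _ (S.isDeriv_euler 0 1))).coef_y_zero i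
    rw [S.coef_comm_euler_y] at h
    simpa using h
  coef_y_of_pow_eq_one _ _ := S.coef_y_of_pow_eq_one_of_central hp hq hf hc
  compat i j := by
    -- The bracket with `x ∂/∂x` multiplies both sides of the condition by `-i`.
    have h := (S.innerCoeffs_of_isInner hq (hc _ (S.isDeriv_euler 1 0))).compat i j
    rw [S.coef_comm_euler_x, S.coef_comm_euler_y] at h
    rcases eq_or_ne i 0 with rfl | hi0
    · rw [pow_zero, sub_self, zero_mul,
        S.coef_y_of_pow_eq_one_of_central hp hq hf hc (pow_zero q), mul_zero]
    by_cases hi : i < p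
    · refine mul_left_cancel₀ (CharP.natCast_ne_zero_of_lt (R := k) hi0 hi) ?_
      push_cast at h
      linear_combination -h
    · rw [S.coef_eq_zero (Or.inl (by omega)), S.coef_eq_zero (Or.inl (by omega)), mul_zero,
        mul_zero]

include S in
lemma isInner_of_central [CharP k p] (hp : 1 < p) (hq : q ^ (p - 1) = 1)
    (hf : IsDeriv k A f) (hc : IsCentralModInner k A f) : IsInner k A f :=
  S.isInner_of_innerCoeffs hf (S.innerCoeffs_of_central hp hq hf hc)

end Field

end QuantumCompleteIntersection

theorem center_HH1_quantum_complete_intersection_eq_bot_general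
    (k : Type*) [Field k] (p e : ℕ) (q : k)
    (hp : p.Prime) (hchar : CharP k p)
    (hq : orderOf q = e) (hediv : e ∣ p - 1)
    (A : Type*) [Ring A] [Algebra k A] (x y : A)
    (hx : x ^ p = 0) (hy : y ^ p = 0) (hyx : y * x = q • (x * y))
    (b : Module.Basis (Fin p × Fin p) k A)
    (hb : ∀ ij : Fin p × Fin p, b ij = x ^ (ij.1 : ℕ) * y ^ (ij.2 : ℕ)) :
    LieAlgebra.center k (HH1 k A) = ⊥ := by
  let S : QuantumCompleteIntersection k A p q := ⟨x, y, hx, hy, hyx, b, hb⟩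
  have hq' : q ^ (p - 1) = 1 := orderOf_dvd_iff_pow_eq_one.mp (hq ▸ hediv)
  exact center_HH1_eq_bot_of_isInner fun f hf hc => S.isInner_of_central hp.one_lt hq' hf hc

/-- Theorem 1.1(ii): the Lie algebra `L = HH¹(A)` has trivial center. -/
theorem center_HH1_quantum_complete_intersection_eq_bot
    (k : Type*) [Field k] (p e : ℕ) (q : k)
    (hp : p.Prime) (hodd : Odd p) (hchar : CharP k p)
    (hq : orderOf q = e) (he : 2 ≤ e) (hediv : e ∣ p - 1)
    (A : Type*) [Ring A] [Algebra k A] (x y : A)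
    (hx : x ^ p = 0) (hy : y ^ p = 0) (hyx : y * x = q • (x * y))
    (b : Module.Basis (Fin p × Fin p) k A)
    (hb : ∀ ij : Fin p × Fin p, b ij = x ^ (ij.1 : ℕ) * y ^ (ij.2 : ℕ)) :
    LieAlgebra.center k (HH1 k A) = ⊥ :=
  center_HH1_quantum_complete_intersection_eq_bot_general k p e q hp hchar hq hediv A x y hx hy hyx
    b hb
end

section
/- With A the quantum complete intersection as below, the derived subalgebra L′ = [L,L] of the Lie algebra L = HH¹(A) is a nilpotent Lie algebra; in particular L is a solvable Lie algebra. -/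
/-!
Context: `A` is the quantum complete intersection
`A = k⟨x,y⟩/(x^p, y^p, yx − q·xy)` over a field `k` of odd prime characteristic `p`,
where `q ∈ k^×` has finite multiplicative order `e` with `2 ≤ e` and `e ∣ p − 1`.
`HH¹(A) = Der(A)/IDer(A)` is the first Hochschild cohomology of `A`, a Lie algebra
with bracket induced by `[f,g] = f∘g − g∘f`.
-/

section HochschildPrelim

variable (k : Type*) [CommRing k] (A : Type*) [Ring A] [Algebra k A]

attribute [local instance 100] LieRing.ofAssociativeRing

end HochschildPrelim

/-!
Let `V m` be the span of the monomials `x^i y^j` with `i + j ≥ m`; it is a multiplicative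
filtration of `A` with `V 0 = A` and `V (2p - 1) = 0`. Applying a derivation `f` to
`yx = q xy` and reading off the coefficients of `x, y, x², y²` gives, as `q ≠ 1` and `p ≥ 3`,
`f x ≡ α x` and `f y ≡ β y` modulo `V 2`: derivations act diagonally on `V 1 / V 2`. So every
derivation preserves the filtration and the commutator of two derivations raises it by one.
The `n`-th term of the lower central series of `[Der A, Der A]` then raises it by `n + 1`, so
`[Der A, Der A]` is nilpotent, hence so is its image `[L, L]` in `L = Der A / IDer A`, and `L`
is solvable.
-/

open LieAlgebra LieModule

section LieQuotient

variable {R L : Type*} [CommRing R] [LieRing L] [LieAlgebra R L]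

theorem LieIdeal.isNilpotent_map {L' : Type*} [LieRing L'] [LieAlgebra R L']
    {f : L →ₗ⁅R⁆ L'} (hf : Function.Surjective f) (I : LieIdeal R L) [LieRing.IsNilpotent I] :
    LieRing.IsNilpotent (I.map f) := by
  have hrange : (f.comp I.incl).range = (I.map f : LieSubalgebra R L') := by
    ext z
    simp [← LieSubmodule.mem_toSubmodule, LieIdeal.coe_map_of_surjective hf]
  have := (f.comp I.incl).isNilpotent_range
  exact (LieEquiv.ofEq _ _ (congrArg _ hrange)).symm.injective.lieAlgebra_isNilpotent

def LieIdeal.mkQ (I : LieIdeal R L) : L →ₗ⁅R⁆ L ⧸ I :=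
  { (LieSubmodule.Quotient.mk' I : L →ₗ[R] L ⧸ I) with map_lie' := rfl }

theorem LieAlgebra.isNilpotent_derivedSeries_quotient (I : LieIdeal R L)
    [LieRing.IsNilpotent (derivedSeries R L 1)] :
    LieRing.IsNilpotent (derivedSeries R (L ⧸ I) 1) := by
  have hsurj : Function.Surjective I.mkQ := LieSubmodule.Quotient.surjective_mk' I
  rw [← LieIdeal.derivedSeries_map_eq 1 hsurj]
  exact LieIdeal.isNilpotent_map hsurj _

variable (R) in
theorem LieAlgebra.isSolvable_of_isSolvable_derivedSeries [IsSolvable (derivedSeries R L 1)] :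
    IsSolvable L := by
  obtain ⟨n, hn⟩ := IsSolvable.solvable R (derivedSeries R L 1)
  rw [LieIdeal.derivedSeries_eq_bot_iff] at hn
  refine IsSolvable.mk (R := R) (k := n + 1) ?_
  rwa [derivedSeries_def, derivedSeriesOfIdeal_add, ← derivedSeries_def]

end LieQuotient

section DegreeRaising

attribute [local instance 100] LieRing.ofAssociativeRing

variable {R M : Type*} [CommRing R] [AddCommGroup M] [Module R M]

def degreeRaising (V : ℕ → Submodule R M) (n : ℕ) : Submodule R (Module.End R M) where
  carrier := {f | ∀ m, ∀ w ∈ V m, f w ∈ V (m + n)}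
  add_mem' hf hg m w hw := add_mem (hf m w hw) (hg m w hw)
  zero_mem' _ _ _ := zero_mem _
  smul_mem' c _ hf m w hw := Submodule.smul_mem _ c (hf m w hw)

variable {V : ℕ → Submodule R M} {f g : Module.End R M}

theorem lie_mem_degreeRaising {a c : ℕ} (hf : f ∈ degreeRaising V a)
    (hg : g ∈ degreeRaising V c) : ⁅f, g⁆ ∈ degreeRaising V (a + c) := by
  intro m w hw
  rw [Ring.lie_def, LinearMap.sub_apply, Module.End.mul_apply, Module.End.mul_apply]
  refine sub_mem ?_ ?_
  · simpa only [add_assoc, add_comm c] using hf _ _ (hg m w hw)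
  · simpa only [add_assoc] using hg _ _ (hf m w hw)

theorem eq_zero_of_mem_degreeRaising (hV : Antitone V) (h0 : V 0 = ⊤) {N n : ℕ}
    (hN : V N = ⊥) (hn : N ≤ n) (hf : f ∈ degreeRaising V n) : f = 0 := by
  ext w
  have hw : f w ∈ V N := hV hn (by simpa using hf 0 w (h0 ▸ Submodule.mem_top))
  simpa [hN] using hw

theorem lie_apply_mem_of_sub_smul_mem (hf : f ∈ degreeRaising V 0)
    (hg : g ∈ degreeRaising V 0) {z : M} {α β : R} {m : ℕ} (hfz : f z - α • z ∈ V m)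
    (hgz : g z - β • z ∈ V m) : ⁅f, g⁆ z ∈ V m := by
  have h : ⁅f, g⁆ z = f (g z - β • z) - g (f z - α • z) + β • (f z - α • z)
      - α • (g z - β • z) := by
    simp only [Ring.lie_def, LinearMap.sub_apply, Module.End.mul_apply, map_sub, map_smul]
    module
  rw [h]
  exact sub_mem (add_mem (sub_mem (hf m _ hgz) (hg m _ hfz)) (Submodule.smul_mem _ _ hfz))
    (Submodule.smul_mem _ _ hgz)

theorem LieHom.isNilpotent_of_injective_of_mem_degreeRaising {K : Type*} [LieRing K]
    [LieAlgebra R K] (φ : K →ₗ⁅R⁆ Module.End R M) (hφ : Function.Injective φ)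
    (hV : Antitone V) (h0 : V 0 = ⊤) {N : ℕ} (hN : V N = ⊥)
    (h1 : ∀ a, φ a ∈ degreeRaising V 1) : LieRing.IsNilpotent K := by
  have hlcs : ∀ n, (lowerCentralSeries R K K n).toSubmodule ≤
      (degreeRaising V (n + 1)).comap (φ : K →ₗ[R] Module.End R M) := by
    intro n
    induction n with
    | zero => exact fun a _ => h1 a
    | succ n ih =>
      rw [lowerCentralSeries_succ, LieSubmodule.lieIdeal_oper_eq_linear_span', Submodule.span_le]
      rintro _ ⟨c, -, d, hd, rfl⟩
      rw [SetLike.mem_coe, Submodule.mem_comap, LieHom.coe_toLinearMap, LieHom.map_lie,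
        show n + 1 + 1 = 1 + (n + 1) by ring]
      exact lie_mem_degreeRaising (h1 c) (ih hd)
  rw [LieRing.IsNilpotent, isNilpotent_iff R]
  refine ⟨N, (LieSubmodule.eq_bot_iff _).mpr fun a ha => hφ ?_⟩
  rw [map_zero]
  exact eq_zero_of_mem_degreeRaising hV h0 hN (Nat.le_succ N) (hlcs N ha)

theorem LieSubalgebra.isNilpotent_derivedSeries_of_lie_mem_degreeRaising
    (L : LieSubalgebra R (Module.End R M)) (hV : Antitone V) (h0 : V 0 = ⊤) {N : ℕ}
    (hN : V N = ⊥) (hL : ∀ f ∈ L, ∀ g ∈ L, ⁅f, g⁆ ∈ degreeRaising V 1) :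
    LieRing.IsNilpotent (derivedSeries R L 1) := by
  have hD : (derivedSeries R L 1).toSubmodule ≤
      (degreeRaising V 1).comap (L.incl : L →ₗ[R] Module.End R M) := by
    rw [derivedSeries_def, derivedSeriesOfIdeal_succ, derivedSeriesOfIdeal_zero,
      LieSubmodule.lieIdeal_oper_eq_linear_span', Submodule.span_le]
    rintro _ ⟨c, -, d, -, rfl⟩
    exact hL _ c.2 _ d.2
  exact (L.incl.comp (derivedSeries R L 1).incl).isNilpotent_of_injective_of_mem_degreeRaising
    (fun a b h => Subtype.ext (Subtype.ext h)) hV h0 hN fun a => hD a.2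

end DegreeRaising

theorem IsDeriv.map_one_s3 {k A : Type*} [CommRing k] [Ring A] [Algebra k A]
    {f : Module.End k A} (hf : IsDeriv k A f) : f 1 = 0 := by
  simpa using hf 1 1

namespace QuantumCompleteIntersection

attribute [local instance 100] LieRing.ofAssociativeRing

variable {k A : Type*} [Field k] [Ring A] [Algebra k A] {p : ℕ}

def filtration (b : Module.Basis (Fin p × Fin p) k A) (m : ℕ) : Submodule k A :=
  Submodule.span k (b '' {ij | m ≤ (ij.1 : ℕ) + ij.2})

section Basis

variable (b : Module.Basis (Fin p × Fin p) k A)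

theorem filtration_antitone : Antitone (filtration b) :=
  fun _ _ h => Submodule.span_mono (Set.image_mono fun _ hij => le_trans h hij)

theorem filtration_zero : filtration b 0 = ⊤ := by
  simp [filtration, b.span_eq]

theorem filtration_eq_bot {m : ℕ} (hm : 2 * p ≤ m + 1) : filtration b m = ⊥ := by
  have : {ij : Fin p × Fin p | m ≤ (ij.1 : ℕ) + ij.2} = ∅ :=
    Set.eq_empty_of_forall_notMem fun ij (hij : m ≤ _) => by omega
  simp [filtration, this]

variable {b}

theorem repr_eq_zero_of_mem_filtration {w : A} {m : ℕ} (hw : w ∈ filtration b m)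
    {ij : Fin p × Fin p} (hij : (ij.1 : ℕ) + ij.2 < m) : b.repr w ij = 0 := by
  by_contra h
  exact absurd ((b.mem_span_image.mp hw) (Finsupp.mem_support_iff.mpr h)) (by simpa using hij)

end Basis

variable {q : k} {x y : A}

theorem pow_mul_pow_swap (hyx : y * x = q • (x * y)) (i j : ℕ) :
    y ^ j * x ^ i = q ^ (i * j) • (x ^ i * y ^ j) := by
  have hy_xpow : ∀ i : ℕ, y * x ^ i = q ^ i • (x ^ i * y) := by
    intro i
    induction i with
    | zero => simp
    | succ i ih =>
      rw [pow_succ, ← mul_assoc, ih, smul_mul_assoc, mul_assoc, hyx, mul_smul_comm, smul_smul,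
        ← mul_assoc, ← pow_succ, ← pow_succ]
  induction j with
  | zero => simp
  | succ j ih =>
    rw [pow_succ, mul_assoc, hy_xpow, mul_smul_comm, ← mul_assoc, ih, smul_mul_assoc, smul_smul,
      mul_assoc, ← pow_succ, ← pow_add, mul_add, mul_one, add_comm]

variable {b : Module.Basis (Fin p × Fin p) k A}
  (hb : ∀ ij : Fin p × Fin p, b ij = x ^ (ij.1 : ℕ) * y ^ (ij.2 : ℕ))
  (hx : x ^ p = 0) (hy : y ^ p = 0)

include hb in
theorem exists_eq_add_mem_filtration_two (w : A) :
    ∃ a α β : k, ∃ u ∈ filtration b 2, w = a • 1 + α • x + β • y + u := by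
  have hw : w ∈ Submodule.span k (Set.range b) := b.span_eq ▸ Submodule.mem_top
  induction hw using Submodule.span_induction with
  | mem _ hz =>
    obtain ⟨⟨⟨i, hi⟩, ⟨j, hj⟩⟩, rfl⟩ := hz
    by_cases h2 : 2 ≤ i + j
    · exact ⟨0, 0, 0, _, Submodule.subset_span ⟨(⟨i, hi⟩, ⟨j, hj⟩), h2, rfl⟩, by simp⟩
    · rw [hb]
      obtain ⟨rfl, rfl⟩ | ⟨rfl, rfl⟩ | ⟨rfl, rfl⟩ :
          (i = 0 ∧ j = 0) ∨ (i = 1 ∧ j = 0) ∨ (i = 0 ∧ j = 1) := by omega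
      · exact ⟨1, 0, 0, 0, zero_mem _, by simp⟩
      · exact ⟨0, 1, 0, 0, zero_mem _, by simp⟩
      · exact ⟨0, 0, 1, 0, zero_mem _, by simp⟩
  | zero => exact ⟨0, 0, 0, 0, zero_mem _, by simp⟩
  | add _ _ _ _ hv hw =>
    obtain ⟨a, α, β, u, hu, rfl⟩ := hv
    obtain ⟨a', α', β', u', hu', rfl⟩ := hw
    exact ⟨a + a', α + α', β + β', u + u', add_mem hu hu', by module⟩
  | smul c _ _ hv =>
    obtain ⟨a, α, β, u, hu, rfl⟩ := hv
    exact ⟨c * a, c * α, c * β, c • u, Submodule.smul_mem _ c hu, by module⟩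

include hb in
theorem coeffs_eq_zero_of_mem_filtration_three (hp : 3 ≤ p) {a a' β α' : k}
    (hz : a • y + a' • x + β • y ^ 2 + α' • x ^ 2 ∈ filtration b 3) :
    a = 0 ∧ a' = 0 ∧ β = 0 ∧ α' = 0 := by
  have hbasis : a • y + a' • x + β • y ^ 2 + α' • x ^ 2 =
      a • b (⟨0, by omega⟩, ⟨1, by omega⟩) + a' • b (⟨1, by omega⟩, ⟨0, by omega⟩)
        + β • b (⟨0, by omega⟩, ⟨2, by omega⟩) + α' • b (⟨2, by omega⟩, ⟨0, by omega⟩) := by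
    simp [hb]
  have hcoeff : ∀ (i j : ℕ) (hi : i < p) (hj : j < p), i + j < 3 →
      b.repr (a • y + a' • x + β • y ^ 2 + α' • x ^ 2) (⟨i, hi⟩, ⟨j, hj⟩) = 0 :=
    fun i j _ _ h => repr_eq_zero_of_mem_filtration hz h
  simp only [hbasis, map_add, map_smul, b.repr_self] at hcoeff
  refine ⟨?_, ?_, ?_, ?_⟩
  · simpa [Finsupp.single_apply, Fin.ext_iff] using hcoeff 0 1 (by omega) (by omega) (by norm_num)
  · simpa [Finsupp.single_apply, Fin.ext_iff] using hcoeff 1 0 (by omega) (by omega) (by norm_num)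
  · simpa [Finsupp.single_apply, Fin.ext_iff] using hcoeff 0 2 (by omega) (by omega) (by norm_num)
  · simpa [Finsupp.single_apply, Fin.ext_iff] using hcoeff 2 0 (by omega) (by omega) (by norm_num)

include hb hx hy

theorem monomial_mem_filtration (i j : ℕ) : x ^ i * y ^ j ∈ filtration b (i + j) := by
  by_cases hi : i < p
  · by_cases hj : j < p
    · rw [← hb (⟨i, hi⟩, ⟨j, hj⟩)]
      exact Submodule.subset_span ⟨_, show i + j ≤ i + j from le_rfl, rfl⟩
    · rw [← Nat.sub_add_cancel (not_lt.mp hj), pow_add, hy, mul_zero, mul_zero]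
      exact zero_mem _
  · rw [← Nat.sub_add_cancel (not_lt.mp hi), pow_add, hx, mul_zero, zero_mul]
    exact zero_mem _

theorem x_mem_filtration_one : x ∈ filtration b 1 := by
  simpa using monomial_mem_filtration hb hx hy 1 0

theorem y_mem_filtration_one : y ∈ filtration b 1 := by
  simpa using monomial_mem_filtration hb hx hy 0 1

variable (hyx : y * x = q • (x * y))
include hyx

theorem mul_mem_filtration {u v : A} {m n l : ℕ} (hu : u ∈ filtration b m)
    (hv : v ∈ filtration b n) (hl : l ≤ m + n) :
    u * v ∈ filtration b l := by
  refine filtration_antitone b hl (Submodule.mul_le.mp ?_ u hu v hv)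
  rw [filtration, filtration, Submodule.span_mul_span, Submodule.span_le]
  rintro _ ⟨_, ⟨ij, hij, rfl⟩, _, ⟨ij', hij', rfl⟩, rfl⟩
  beta_reduce
  rw [SetLike.mem_coe, hb, hb, mul_assoc, ← mul_assoc (y ^ _), pow_mul_pow_swap hyx,
    smul_mul_assoc, mul_smul_comm, ← mul_assoc, ← mul_assoc, ← pow_add, mul_assoc, ← pow_add]
  refine Submodule.smul_mem _ _ (filtration_antitone b ?_ (monomial_mem_filtration hb hx hy _ _))
  simp only [Set.mem_ofPred_eq] at hij hij'
  omega

theorem pow_mem_filtration {z : A} (hz : z ∈ filtration b 1) (i : ℕ) :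
    z ^ i ∈ filtration b i := by
  induction i with
  | zero => simp [filtration_zero]
  | succ i ih => rw [pow_succ]; exact mul_mem_filtration hb hx hy hyx ih hz le_rfl

variable {f g : Module.End k A}

theorem isDeriv_pow_mem_filtration (hf : IsDeriv k A f) {z : A} {n : ℕ}
    (hz : z ∈ filtration b 1) (hfz : f z ∈ filtration b (n + 1)) (i : ℕ) :
    f (z ^ i) ∈ filtration b (i + n) := by
  induction i with
  | zero => rw [pow_zero, hf.map_one_s3]; exact zero_mem _
  | succ i ih =>
    rw [pow_succ, hf]
    exact add_mem (mul_mem_filtration hb hx hy hyx (pow_mem_filtration hb hx hy hyx hz i) hfz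
      (by omega)) (mul_mem_filtration hb hx hy hyx ih hz (by omega))

theorem isDeriv_mem_degreeRaising (hf : IsDeriv k A f) {n : ℕ}
    (hfx : f x ∈ filtration b (n + 1)) (hfy : f y ∈ filtration b (n + 1)) :
    f ∈ degreeRaising (filtration b) n := by
  intro m w hw
  refine (Submodule.span_le (p := (filtration b (m + n)).comap f)).mpr ?_ hw
  rintro _ ⟨ij, hij, rfl⟩
  have hx1 := x_mem_filtration_one hb hx hy
  have hy1 := y_mem_filtration_one hb hx hy
  simp only [Set.mem_ofPred_eq] at hij
  rw [SetLike.mem_coe, Submodule.mem_comap, hb, hf]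
  exact add_mem
    (mul_mem_filtration hb hx hy hyx (pow_mem_filtration hb hx hy hyx hx1 _)
      (isDeriv_pow_mem_filtration hb hx hy hyx hf hy1 hfy _) (by omega))
    (mul_mem_filtration hb hx hy hyx (isDeriv_pow_mem_filtration hb hx hy hyx hf hx1 hfx _)
      (pow_mem_filtration hb hx hy hyx hy1 _) (by omega))

theorem isDeriv_sub_smul_mem_filtration_two (hp : 3 ≤ p) (hq : q ≠ 1) (hf : IsDeriv k A f) :
    (∃ α : k, f x - α • x ∈ filtration b 2) ∧ ∃ β : k, f y - β • y ∈ filtration b 2 := by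
  obtain ⟨a, α, β, u, hu, hfx⟩ := exists_eq_add_mem_filtration_two hb (f x)
  obtain ⟨a', α', β', u', hu', hfy⟩ := exists_eq_add_mem_filtration_two hb (f y)
  have hrel : y * f x + f y * x = q • (x * f y + f x * y) := by rw [← hf, ← hf, hyx, map_smul]
  have hexp : (1 - q) • (a • y + a' • x + β • y ^ 2 + α' • x ^ 2)
      = q • (x * u' + u * y) - (y * u + u' * x) := by
    rw [hfx, hfy] at hrel
    simp only [mul_add, add_mul, mul_smul_comm, smul_mul_assoc, mul_one, one_mul, hyx, sq]
      at hrel ⊢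
    linear_combination (norm := module) hrel
  have hz : a • y + a' • x + β • y ^ 2 + α' • x ^ 2 ∈ filtration b 3 := by
    have hx1 := x_mem_filtration_one hb hx hy
    have hy1 := y_mem_filtration_one hb hx hy
    rw [← Submodule.smul_mem_iff _ (sub_ne_zero.mpr hq.symm), hexp]
    exact sub_mem
      (Submodule.smul_mem _ _ (add_mem (mul_mem_filtration hb hx hy hyx hx1 hu' le_rfl)
        (mul_mem_filtration hb hx hy hyx hu hy1 le_rfl)))
      (add_mem (mul_mem_filtration hb hx hy hyx hy1 hu le_rfl)
        (mul_mem_filtration hb hx hy hyx hu' hx1 le_rfl))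
  obtain ⟨ha, ha', hβ, hα'⟩ := coeffs_eq_zero_of_mem_filtration_three hb hp hz
  refine ⟨⟨α, ?_⟩, β', ?_⟩
  · simpa [hfx, ha, hβ] using hu
  · simpa [hfy, ha', hα'] using hu'

variable (hp : 3 ≤ p) (hq : q ≠ 1)
include hp hq

theorem isDeriv_mem_degreeRaising_zero (hf : IsDeriv k A f) :
    f ∈ degreeRaising (filtration b) 0 := by
  obtain ⟨⟨α, hα⟩, β, hβ⟩ := isDeriv_sub_smul_mem_filtration_two hb hx hy hyx hp hq hf
  have hfx := add_mem (filtration_antitone b one_le_two hα)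
    (Submodule.smul_mem _ α (x_mem_filtration_one hb hx hy))
  have hfy := add_mem (filtration_antitone b one_le_two hβ)
    (Submodule.smul_mem _ β (y_mem_filtration_one hb hx hy))
  rw [sub_add_cancel] at hfx hfy
  exact isDeriv_mem_degreeRaising hb hx hy hyx hf hfx hfy

theorem lie_mem_degreeRaising_one (hf : f ∈ Der k A) (hg : g ∈ Der k A) :
    ⁅f, g⁆ ∈ degreeRaising (filtration b) 1 := by
  obtain ⟨⟨α, hfx⟩, α', hfy⟩ := isDeriv_sub_smul_mem_filtration_two hb hx hy hyx hp hq hf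
  obtain ⟨⟨β, hgx⟩, β', hgy⟩ := isDeriv_sub_smul_mem_filtration_two hb hx hy hyx hp hq hg
  have hf0 := isDeriv_mem_degreeRaising_zero hb hx hy hyx hp hq hf
  have hg0 := isDeriv_mem_degreeRaising_zero hb hx hy hyx hp hq hg
  exact isDeriv_mem_degreeRaising hb hx hy hyx ((Der k A).lie_mem hf hg)
    (lie_apply_mem_of_sub_smul_mem hf0 hg0 hfx hgx) (lie_apply_mem_of_sub_smul_mem hf0 hg0 hfy hgy)

end QuantumCompleteIntersection

theorem derived_HH1_nilpotent_quantum_complete_intersection_general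
    (k : Type*) [Field k] (p e : ℕ) (q : k)
    (hp : p.Prime) (hodd : Odd p)
    (hq : orderOf q = e) (he : 2 ≤ e)
    (A : Type*) [Ring A] [Algebra k A] (x y : A)
    (hx : x ^ p = 0) (hy : y ^ p = 0) (hyx : y * x = q • (x * y))
    (b : Module.Basis (Fin p × Fin p) k A)
    (hb : ∀ ij : Fin p × Fin p, b ij = x ^ (ij.1 : ℕ) * y ^ (ij.2 : ℕ)) :
    LieRing.IsNilpotent ↥(LieAlgebra.derivedSeries k (HH1 k A) 1) ∧
    LieAlgebra.IsSolvable (HH1 k A) := by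
  have hp3 : 3 ≤ p := by
    obtain ⟨m, rfl⟩ := hodd
    have := hp.two_le
    omega
  have hq1 : q ≠ 1 := by
    rintro rfl
    rw [orderOf_one] at hq
    omega
  have hDer : LieRing.IsNilpotent (derivedSeries k (Der k A) 1) := by
    open QuantumCompleteIntersection in
    exact (Der k A).isNilpotent_derivedSeries_of_lie_mem_degreeRaising (filtration_antitone b)
        (filtration_zero b) (filtration_eq_bot b (m := 2 * p) (by omega))
        fun _ hf _ hg => lie_mem_degreeRaising_one hb hx hy hyx hp3 hq1 hf hg
  have hnil : LieRing.IsNilpotent (derivedSeries k (HH1 k A) 1) :=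
    isNilpotent_derivedSeries_quotient (IDer k A)
  exact ⟨hnil, isSolvable_of_isSolvable_derivedSeries k⟩

/-- Theorem 1.1(iv): the derived subalgebra `L' = [L,L]` of `L = HH¹(A)` is nilpotent;
in particular `L` is solvable. -/
theorem derived_HH1_nilpotent_quantum_complete_intersection
    (k : Type*) [Field k] (p e : ℕ) (q : k)
    (hp : p.Prime) (hodd : Odd p) (hchar : CharP k p)
    (hq : orderOf q = e) (he : 2 ≤ e) (hediv : e ∣ p - 1)
    (A : Type*) [Ring A] [Algebra k A] (x y : A)
    (hx : x ^ p = 0) (hy : y ^ p = 0) (hyx : y * x = q • (x * y))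
    (b : Module.Basis (Fin p × Fin p) k A)
    (hb : ∀ ij : Fin p × Fin p, b ij = x ^ (ij.1 : ℕ) * y ^ (ij.2 : ℕ)) :
    LieRing.IsNilpotent ↥(LieAlgebra.derivedSeries k (HH1 k A) 1) ∧
    LieAlgebra.IsSolvable (HH1 k A) :=
  derived_HH1_nilpotent_quantum_complete_intersection_general k p e q hp hodd hq he A x y hx hy hyx
    b hb
end

section
/- Let A be a split local symmetric finite-dimensional k-algebra. Then dim_k(J(A)/J(A)²) ≤ dim_k {ℓ ∈ HH¹(A) : z·ℓ = 0 for all z ∈ J(A) ∩ Z(A)}, i.e. the dimension of J(A)/J(A)² is at most the dimension of the socle of HH¹(A) as a module over the (local) center Z(A). -/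
/-!
Context: `A` is the quantum complete intersection
`A = k⟨x,y⟩/(x^p, y^p, yx − q·xy)` over a field `k` of odd prime characteristic `p`,
where `q ∈ k^×` has finite multiplicative order `e` with `2 ≤ e` and `e ∣ p − 1`.
`HH¹(A) = Der(A)/IDer(A)` is the first Hochschild cohomology of `A`, a Lie algebra
with bracket induced by `[f,g] = f∘g − g∘f`.
-/

attribute [local instance 100] LieRing.ofAssociativeRing

section ZAction

variable (k : Type*) [CommRing k] (A : Type*) [Ring A] [Algebra k A]

/-- Multiplication of a derivation by a central element `z`:  `(z·f)(a) = z f(a)`. -/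
def zmul (z : A) (hz : z ∈ Subalgebra.center k A) : Der k A →ₗ[k] Der k A where
  toFun f := ⟨(LinearMap.mulLeft k z) ∘ₗ (f : Module.End k A), by
    intro a b
    have hf : IsDeriv k A f.1 := f.2
    have hc : ∀ c : A, c * z = z * c := fun c => Subalgebra.mem_center_iff.mp hz c
    simp only [LinearMap.comp_apply, LinearMap.mulLeft_apply]
    rw [hf a b, mul_add, ← mul_assoc, ← mul_assoc, ← hc a, mul_assoc]⟩
  map_add' f g := by
    ext a
    simp [mul_add]
  map_smul' t f := by
    ext a
    show z * (↑(t • f) : Module.End k A) a = (↑(t • (⟨LinearMap.mulLeft k z ∘ₗ ↑f, by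
      intro a b
      have hf : IsDeriv k A f.1 := f.2
      have hc : ∀ c : A, c * z = z * c := fun c => Subalgebra.mem_center_iff.mp hz c
      simp only [LinearMap.comp_apply, LinearMap.mulLeft_apply]
      rw [hf a b, mul_add, ← mul_assoc, ← mul_assoc, ← hc a, mul_assoc]⟩ : Der k A)) : Module.End k A) a
    rw [Submodule.coe_smul, Submodule.coe_smul]
    simp [mul_smul_comm]

/-- The action of a central element `z ∈ Z(A)` on `HH¹(A)`, induced by `(z·f)(a) = z f(a)`
on derivations. -/
def zAct (z : A) (hz : z ∈ Subalgebra.center k A) : HH1 k A →ₗ[k] HH1 k A :=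
  Submodule.mapQ (IDer k A).toSubmodule (IDer k A).toSubmodule (zmul k A z hz) (by
    rintro f ⟨c, hc⟩
    refine ⟨z * c, fun a => ?_⟩
    have hcen : ∀ c : A, c * z = z * c := fun c => Subalgebra.mem_center_iff.mp hz c
    show z * f.1 a = _
    have h2 : a * (z * c) = z * (a * c) := by rw [← mul_assoc, hcen a, mul_assoc]
    rw [hc a, mul_sub, ← h2, ← mul_assoc])

/-- The socle of `HH¹(A)` as a `Z(A)`-module: the subspace of elements annihilated by
every element of `J(A) ∩ Z(A)` (the maximal ideal of the local ring `Z(A)`). -/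
def socZHH1 : Submodule k (HH1 k A) where
  carrier := {ℓ | ∀ (z : A) (hz : z ∈ Subalgebra.center k A),
    z ∈ Ideal.jacobson (⊥ : Ideal A) → zAct k A z hz ℓ = 0}
  add_mem' := by
    intro a b ha hb z hz hzJ
    rw [map_add, ha z hz hzJ, hb z hz hzJ, add_zero]
  zero_mem' := by
    intro z hz hzJ
    exact map_zero _
  smul_mem' := by
    intro c a ha z hz hzJ
    rw [map_smul, ha z hz hzJ, smul_zero]

end ZAction

/-!
Write `A = k·1 ⊕ J` and let `φ : A →ₐ[k] k` be the character with kernel `J`. Nondegeneracy of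
the symmetrizing form `s` yields `z` with `s (b * z) = φ b` for all `b`; then
`a * z = z * a = φ a • z`, so `J z = 0` and `s z = φ 1 = 1`. A linear form `α` vanishing on
`k·1 + J²` satisfies `α (a * b) = φ a * α b + α a * φ b`, so `a ↦ α a • z` is a derivation. It is
killed by `J ∩ Z(A)` because `J z = 0`, and it is inner only for `α = 0`, since applying `s` to
`α a • z = c * a - a * c` gives `α a = 0`. These forms make up a space of dimension
`dim J - dim J² = dim J/J²`.
-/

open Module Submodule

theorem Submodule.finrank_quotient_comap_subtype_eq_finrank_dualAnnihilator_sup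
    {K V : Type*} [Field K] [AddCommGroup V] [Module K V] [FiniteDimensional K V]
    {S I I₂ : Submodule K V} (hSI : IsCompl S I) (hI₂ : I₂ ≤ I) :
    finrank K (I ⧸ I₂.comap I.subtype) = finrank K (S ⊔ I₂).dualAnnihilator := by
  have h₁ := finrank_quotient_add_finrank (I₂.comap I.subtype)
  have h₂ := (comapSubtypeEquivOfLe hI₂).finrank_eq
  have h₃ := finrank_add_eq_of_isCompl hSI
  have h₄ := finrank_sup_add_finrank_inf_eq S I₂
  have h₅ := Subspace.finrank_add_finrank_dualAnnihilator_eq (S ⊔ I₂)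
  rw [(hSI.disjoint.mono_right hI₂).eq_bot, finrank_bot] at h₄
  omega

section Character

variable {k A : Type*} [Field k] [Ring A] [Algebra k A] (φ : A →ₐ[k] k)

theorem AlgHom.sub_smul_one_mem_ker (a : A) : a - φ a • (1 : A) ∈ RingHom.ker φ := by
  simp [RingHom.mem_ker]

theorem AlgHom.isCompl_span_one_ker :
    IsCompl (span k {(1 : A)}) ((RingHom.ker φ).restrictScalars k) := by
  constructor
  · rw [disjoint_iff, eq_bot_iff]
    rintro x ⟨hx₁, hxφ⟩
    obtain ⟨c, rfl⟩ := mem_span_singleton.mp hx₁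
    have hc : c = 0 := by simpa [RingHom.mem_ker] using hxφ
    simp [hc]
  · rw [codisjoint_iff, eq_top_iff]
    intro a _
    have h := add_mem_sup (smul_mem (span k {(1 : A)}) (φ a) (mem_span_singleton_self 1))
      (show a - φ a • (1 : A) ∈ (RingHom.ker φ).restrictScalars k from φ.sub_smul_one_mem_ker a)
    rwa [add_sub_cancel] at h

theorem AlgHom.apply_mul_of_mem_dualAnnihilator {α : Dual k A}
    (hα : α ∈ (span k {(1 : A)} ⊔
      (RingHom.ker φ).restrictScalars k * (RingHom.ker φ).restrictScalars k).dualAnnihilator)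
    (a b : A) : α (a * b) = φ a * α b + α a * φ b := by
  rw [mem_dualAnnihilator] at hα
  have h₁ : α 1 = 0 := hα 1 (mem_sup_left (mem_span_singleton_self 1))
  have h₂ := hα _ (mem_sup_right
    (mul_mem_mul (φ.sub_smul_one_mem_ker a) (φ.sub_smul_one_mem_ker b)))
  simp only [sub_mul, mul_sub, smul_mul_assoc, mul_smul_comm, one_mul, mul_one,
    map_sub, map_smul, smul_eq_mul, h₁] at h₂
  linear_combination h₂

theorem exists_algHom_ker_eq [Nontrivial A] (I : Ideal A) [I.IsTwoSided]
    (hsplit : ∀ a : A, ∃ (c : k) (r : A), r ∈ I ∧ a = c • (1 : A) + r)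
    (hdisj : span k {(1 : A)} ⊓ I.restrictScalars k = ⊥) :
    ∃ φ : A →ₐ[k] k, RingHom.ker φ = I := by
  have hinj : Function.Injective (Algebra.ofId k (A ⧸ I)) := by
    refine (injective_iff_map_eq_zero _).mpr fun c hc => ?_
    have hmem : c • (1 : A) ∈ span k {(1 : A)} ⊓ I.restrictScalars k :=
      ⟨smul_mem _ c (mem_span_singleton_self 1), by
        rwa [Algebra.ofId_apply, ← Ideal.Quotient.mk_algebraMap, Ideal.Quotient.eq_zero_iff_mem,
          Algebra.algebraMap_eq_smul_one] at hc⟩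
    simpa [hdisj] using hmem
  have hsurj : Function.Surjective (Algebra.ofId k (A ⧸ I)) := by
    rintro ⟨a⟩
    obtain ⟨c, r, hr, rfl⟩ := hsplit a
    refine ⟨c, ?_⟩
    rw [Algebra.ofId_apply, ← Ideal.Quotient.mk_algebraMap, Algebra.algebraMap_eq_smul_one]
    exact Ideal.Quotient.eq.mpr (by simpa using I.neg_mem hr)
  let e := AlgEquiv.ofBijective _ ⟨hinj, hsurj⟩
  refine ⟨e.symm.toAlgHom.comp (Ideal.Quotient.mkₐ k I), Ideal.ext fun a => ?_⟩
  simp [RingHom.mem_ker, Ideal.Quotient.eq_zero_iff_mem]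

end Character

section TraceForm

variable {k A : Type*} [Field k] [Ring A] [Algebra k A] {s : A →ₗ[k] k}

theorem eq_zero_of_forall_apply_mul_eq_zero (hs : ∀ I : Ideal A, (∀ a ∈ I, s a = 0) → I = ⊥)
    {a : A} (h : ∀ b, s (b * a) = 0) : a = 0 :=
  Ideal.span_singleton_eq_bot.mp <| hs _ fun x hx => by
    obtain ⟨b, rfl⟩ := Ideal.mem_span_singleton'.mp hx
    exact h b

theorem exists_forall_apply_mul_eq [FiniteDimensional k A]
    (hs : ∀ I : Ideal A, (∀ a ∈ I, s a = 0) → I = ⊥) (φ : Dual k A) :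
    ∃ z : A, ∀ b, s (b * z) = φ b := by
  let T : A →ₗ[k] Dual k A := ((LinearMap.mul k A).compr₂ s).flip
  have hT : Function.Injective T := (injective_iff_map_eq_zero T).mpr fun a ha =>
    eq_zero_of_forall_apply_mul_eq_zero hs (LinearMap.congr_fun ha)
  obtain ⟨z, hz⟩ := (LinearMap.injective_iff_surjective_of_finrank_eq_finrank
    Subspace.dual_finrank_eq.symm).mp hT φ
  exact ⟨z, LinearMap.congr_fun hz⟩

theorem mul_eq_smul_of_forall_apply_mul_eq (hs : ∀ I : Ideal A, (∀ a ∈ I, s a = 0) → I = ⊥)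
    (φ : A →ₐ[k] k) {z : A} (hz : ∀ b, s (b * z) = φ b) (a : A) : a * z = φ a • z :=
  sub_eq_zero.mp <| eq_zero_of_forall_apply_mul_eq_zero hs fun b => by
    rw [mul_sub, map_sub, ← mul_assoc, hz, mul_smul_comm, map_smul, hz, map_mul, smul_eq_mul,
      mul_comm, sub_self]

theorem mul_eq_smul_of_forall_apply_mul_eq' (hcomm : ∀ a b : A, s (a * b) = s (b * a))
    (hs : ∀ I : Ideal A, (∀ a ∈ I, s a = 0) → I = ⊥) (φ : A →ₐ[k] k) {z : A}
    (hz : ∀ b, s (b * z) = φ b) (a : A) : z * a = φ a • z :=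
  sub_eq_zero.mp <| eq_zero_of_forall_apply_mul_eq_zero hs fun b => by
    rw [mul_sub, map_sub, ← mul_assoc, hcomm, ← mul_assoc, hz, mul_smul_comm, map_smul, hz,
      map_mul, smul_eq_mul, sub_self]

end TraceForm

theorem isDeriv_smulRight {k A : Type*} [Field k] [Ring A] [Algebra k A] {φ : A → k}
    {α : Dual k A} {z : A} (hl : ∀ a, a * z = φ a • z) (hr : ∀ a, z * a = φ a • z)
    (hα : ∀ a b, α (a * b) = φ a * α b + α a * φ b) : IsDeriv k A (α.smulRight z) := by
  intro a b
  simp only [LinearMap.smulRight_apply]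
  rw [mul_smul_comm, smul_mul_assoc, hl, hr, smul_smul, smul_smul, hα, add_smul, mul_comm (α a),
    mul_comm (α b)]

section SocleEmbedding

variable (k : Type*) [Field k] {A : Type*} [Ring A] [Algebra k A]

def smulRightDer (z : A) (W : Submodule k (Dual k A))
    (h : ∀ α ∈ W, IsDeriv k A (α.smulRight z)) : W →ₗ[k] Der k A :=
  LinearMap.codRestrict (Der k A).toSubmodule (LinearMap.smulRightₗ.flip z ∘ₗ W.subtype)
    fun α => h α α.2

variable {k} {z : A} {W : Submodule k (Dual k A)}

theorem smulRightDer_apply (h : ∀ α ∈ W, IsDeriv k A (α.smulRight z)) (α : W) (a : A) :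
    (smulRightDer k z W h α : Module.End k A) a = α.1 a • z :=
  rfl

theorem mk_smulRightDer_mem_socZHH1 (h : ∀ α ∈ W, IsDeriv k A (α.smulRight z))
    (hrad : ∀ r ∈ Ideal.jacobson (⊥ : Ideal A), r * z = 0) (α : W) :
    Submodule.Quotient.mk (p := (IDer k A).toSubmodule) (smulRightDer k z W h α) ∈
      socZHH1 k A := by
  intro c hc hcJ
  have hzero : zmul k A c hc (smulRightDer k z W h α) = 0 :=
    Subtype.ext <| LinearMap.ext fun a => by
      show c * (smulRightDer k z W h α : Module.End k A) a = 0
      rw [smulRightDer_apply, mul_smul_comm, hrad c hcJ, smul_zero]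
  rw [zAct, mapQ_apply, hzero]
  rfl

theorem eq_zero_of_smulRightDer_mem_IDer (h : ∀ α ∈ W, IsDeriv k A (α.smulRight z))
    {s : A →ₗ[k] k} (hcomm : ∀ a b : A, s (a * b) = s (b * a)) (hsz : s z ≠ 0) {α : W}
    (hα : smulRightDer k z W h α ∈ IDer k A) : α = 0 := by
  obtain ⟨c, hc⟩ := hα
  ext a
  have h₁ := congr_arg s (hc a)
  rw [smulRightDer_apply, map_smul, map_sub, hcomm, sub_self, smul_eq_mul] at h₁
  exact (mul_eq_zero.mp h₁).resolve_right hsz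

theorem finrank_le_finrank_socZHH1 [FiniteDimensional k A]
    (h : ∀ α ∈ W, IsDeriv k A (α.smulRight z))
    (hrad : ∀ r ∈ Ideal.jacobson (⊥ : Ideal A), r * z = 0)
    {s : A →ₗ[k] k} (hcomm : ∀ a b : A, s (a * b) = s (b * a)) (hsz : s z ≠ 0) :
    finrank k W ≤ finrank k (socZHH1 k A) := by
  have : FiniteDimensional k (Der k A) :=
    FiniteDimensional.finiteDimensional_submodule (Der k A).toSubmodule
  let G : W →ₗ[k] socZHH1 k A :=
    ((IDer k A).toSubmodule.mkQ ∘ₗ smulRightDer k z W h).codRestrict _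
      (mk_smulRightDer_mem_socZHH1 h hrad)
  have hG : Function.Injective G := by
    rw [injective_iff_map_eq_zero]
    exact fun α hα => eq_zero_of_smulRightDer_mem_IDer h hcomm hsz <|
      (Submodule.Quotient.mk_eq_zero _).mp (congr_arg Subtype.val hα)
  exact LinearMap.finrank_le_finrank_of_injective hG

end SocleEmbedding

/-- Theorem (radical bound for split local symmetric algebras):
`dim_k J(A)/J(A)² ≤ dim_k soc_{Z(A)}(HH¹(A))`, where the socle of `HH¹(A)` over the local
ring `Z(A)` is the subspace of elements annihilated by `J(A) ∩ Z(A)`. -/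
theorem dim_radical_quot_le_dim_socle_HH1_of_split_local_symmetric
    (k : Type*) [Field k] (A : Type*) [Ring A] [Algebra k A] [FiniteDimensional k A]
    [IsLocalRing A]
    (hsl : ∀ a : A, ∃ (c : k) (r : A), r ∈ Ideal.jacobson (⊥ : Ideal A) ∧ a = c • (1 : A) + r)
    (hsl2 : Submodule.span k {(1 : A)} ⊓
      Submodule.restrictScalars k (Ideal.jacobson (⊥ : Ideal A)) = ⊥)
    (hsym : ∃ s : A →ₗ[k] k, (∀ a b : A, s (a * b) = s (b * a)) ∧
      ∀ I : Ideal A, (∀ a ∈ I, s a = 0) → I = ⊥) :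
    Module.finrank k
      (↥(Submodule.restrictScalars k (Ideal.jacobson (⊥ : Ideal A))) ⧸
        Submodule.comap (Submodule.restrictScalars k (Ideal.jacobson (⊥ : Ideal A))).subtype
          (Submodule.restrictScalars k (Ideal.jacobson (⊥ : Ideal A)) *
            Submodule.restrictScalars k (Ideal.jacobson (⊥ : Ideal A)) : Submodule k A)) ≤
    Module.finrank k ↥(socZHH1 k A) := by
  obtain ⟨s, hcomm, hs⟩ := hsym
  obtain ⟨φ, hφ⟩ := exists_algHom_ker_eq (Ideal.jacobson ⊥) hsl hsl2
  obtain ⟨z, hz⟩ := exists_forall_apply_mul_eq hs φ.toLinearMap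
  have hl := mul_eq_smul_of_forall_apply_mul_eq hs φ hz
  have hr := mul_eq_smul_of_forall_apply_mul_eq' hcomm hs φ hz
  have hrad : ∀ r ∈ Ideal.jacobson (⊥ : Ideal A), r * z = 0 := fun r hrJ => by
    rw [hl, RingHom.mem_ker.mp (hφ ▸ hrJ), zero_smul]
  have hsz : s z ≠ 0 := by
    rw [← one_mul z, hz, AlgHom.toLinearMap_apply, map_one]
    exact one_ne_zero
  rw [← hφ]
  calc _ = finrank k (span k {(1 : A)} ⊔
        (RingHom.ker φ).restrictScalars k * (RingHom.ker φ).restrictScalars k).dualAnnihilator :=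
      finrank_quotient_comap_subtype_eq_finrank_dualAnnihilator_sup φ.isCompl_span_one_ker
        (mul_le.mpr fun m hm n _ => Ideal.mul_mem_right n _ hm)
    _ ≤ finrank k (socZHH1 k A) :=
      finrank_le_finrank_socZHH1
        (fun _ hα => isDeriv_smulRight hl hr (φ.apply_mul_of_mem_dualAnnihilator hα))
        hrad hcomm hsz
end

section
/- Let A be a finite-dimensional split local symmetric k-algebra. Then the second socle of A is central: every a ∈ A with J(A)²·a = {0} lies in Z(A). -/
section SplitLocal

/-- `A = k·1 ⊕ J(A)`: every element of `A` is of the form `λ·1 + r` with `λ ∈ k` and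
`r ∈ J(A)`.  Together with `IsLocalRing A` this says that `A` is split local. -/
def IsSplitLocalDecomp (k A : Type*) [CommRing k] [Ring A] [Algebra k A] : Prop :=
  (∀ a : A, ∃ (c : k) (r : A), r ∈ Ideal.jacobson (⊥ : Ideal A) ∧ a = c • (1 : A) + r) ∧
  Submodule.span k {(1 : A)} ⊓
    Submodule.restrictScalars k (Ideal.jacobson (⊥ : Ideal A)) = ⊥

end SplitLocal

/-- `A` is a symmetric `k`-algebra: it admits a `k`-linear form `s` with `s(ab) = s(ba)`
whose kernel contains no nonzero left ideal. -/
def IsSymmetricAlg (k A : Type*) [CommRing k] [Ring A] [Algebra k A] : Prop :=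
  ∃ s : A →ₗ[k] k, (∀ a b : A, s (a * b) = s (b * a)) ∧
    ∀ I : Ideal A, (∀ a ∈ I, s a = 0) → I = ⊥

/-- Lemma (second socle is central): if `A` is a finite-dimensional split local symmetric
`k`-algebra, then every `a ∈ A` with `J(A)²·a = 0` lies in the center `Z(A)`. -/
theorem socle_two_central_of_split_local_symmetric
    (k : Type*) [Field k] (A : Type*) [Ring A] [Algebra k A] [FiniteDimensional k A]
    [IsLocalRing A] (hsl : IsSplitLocalDecomp k A) (hsym : IsSymmetricAlg k A) :
    ∀ a : A,
      (∀ r ∈ (Submodule.restrictScalars k (Ideal.jacobson (⊥ : Ideal A)) *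
        Submodule.restrictScalars k (Ideal.jacobson (⊥ : Ideal A)) : Submodule k A),
        r * a = 0) →
      a ∈ Subalgebra.center k A := by
  obtain ⟨s, hs, hker⟩ := hsym
  intro a ha
  rw [Subalgebra.mem_center_iff]
  intro b
  obtain ⟨c, r, hr, rfl⟩ := hsl.1 b
  have key : a * r - r * a = 0 := by
    have hI : ∀ y ∈ Ideal.span {a * r - r * a}, s y = 0 := by
      intro y hy
      rw [Ideal.span, Submodule.mem_span_singleton] at hy
      obtain ⟨x, rfl⟩ := hy
      obtain ⟨cx, j, hj, rfl⟩ := hsl.1 x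
      have h1 : s (j * (a * r)) = 0 := by
        rw [← mul_assoc, hs]
        rw [← mul_assoc]
        rw [ha _ (Submodule.mul_mem_mul hr hj), map_zero]
      have h2 : s (j * (r * a)) = 0 := by
        rw [← mul_assoc]
        rw [ha _ (Submodule.mul_mem_mul hj hr), map_zero]
      have h3 : s (a * r) = s (r * a) := hs a r
      simp only [smul_eq_mul, add_mul, smul_mul_assoc, one_mul, mul_sub, map_add,
        map_smul, map_sub, h1, h2, h3]
      ring
    have hz := hker _ hI
    have hm : a * r - r * a ∈ Ideal.span {a * r - r * a} := Ideal.subset_span rfl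
    rw [hz] at hm
    exact hm
  have key' : a * r = r * a := sub_eq_zero.mp key
  rw [add_mul, mul_add, key', smul_mul_assoc, mul_smul_comm, one_mul, mul_one]
end

section
/- Let k be a field of odd prime characteristic p, let q ∈ k^× be arbitrary, and let A = k⟨x,y⟩/(x^p, y^p, yx − q·xy), which has k-basis the monomials x^i y^j with 0 ≤ i,j ≤ p−1. If there exists a k-linear form s : A → k with s(ab) = s(ba) for all a,b ∈ A whose kernel contains no nonzero two-sided ideal of A (in particular, if A is a symmetric algebra), then q^{p−1} = 1; equivalently, the multiplicative order of q divides p−1. -/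
/-!
The element `z = x^(p-1) y^(p-1)` spans the socle: `x` and `y` kill it on both sides, so
`a z = z a = c₀(a) z`, where `c₀(a)` is the coefficient of `1` in `a`. Hence `k z` is a nonzero
two-sided ideal and `s z ≠ 0`. On the other hand, writing `z = (x^(p-1) y^(p-2)) y` and moving
the last `y` to the front, the trace property gives `s z = q^(p-1) s z`.
-/

section QCommuting

variable {k A : Type*} [CommSemiring k] [Semiring A] [Algebra k A] {x y : A} {q : k}

theorem mul_pow_eq_smul_of_mul_eq_smul (hyx : y * x = q • (x * y)) (n : ℕ) :
    y * x ^ n = q ^ n • (x ^ n * y) := by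
  induction n with
  | zero => simp
  | succ n ih =>
    rw [pow_succ, ← mul_assoc, ih, smul_mul_assoc, mul_assoc, hyx, mul_smul_comm, smul_smul,
      ← pow_succ, ← mul_assoc, ← pow_succ]

theorem pow_mul_eq_smul_of_mul_eq_smul (hyx : y * x = q • (x * y)) (m : ℕ) :
    y ^ m * x = q ^ m • (x * y ^ m) := by
  induction m with
  | zero => simp
  | succ m ih =>
    rw [pow_succ', mul_assoc, ih, mul_smul_comm, ← mul_assoc, hyx, smul_mul_assoc, smul_smul,
      ← pow_succ, mul_assoc, ← pow_succ']

theorem LinearMap.apply_pow_mul_pow_eq_mul_self (hyx : y * x = q • (x * y)) (s : A →ₗ[k] k)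
    (hs : ∀ a b : A, s (a * b) = s (b * a)) (n : ℕ) :
    s (x ^ n * y ^ n) = q ^ n * s (x ^ n * y ^ n) := by
  cases n with
  | zero => simp
  | succ m =>
    calc s (x ^ (m + 1) * y ^ (m + 1))
        = s (y * (x ^ (m + 1) * y ^ m)) := by rw [pow_succ y, ← mul_assoc, hs]
      _ = q ^ (m + 1) * s (x ^ (m + 1) * y ^ (m + 1)) := by
        rw [← mul_assoc, mul_pow_eq_smul_of_mul_eq_smul hyx, smul_mul_assoc, mul_assoc,
          ← pow_succ', map_smul, smul_eq_mul]

end QCommuting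

section Socle

variable {A : Type*} [Semiring A] {x y z : A}

theorem pow_mul_pow_mul_eq_zero (hx : x * z = 0) (hy : y * z = 0) {i j : ℕ}
    (hij : i ≠ 0 ∨ j ≠ 0) : x ^ i * y ^ j * z = 0 := by
  cases j with
  | zero =>
    obtain ⟨i, rfl⟩ := Nat.exists_eq_succ_of_ne_zero (hij.resolve_right (by simp))
    rw [pow_zero, mul_one, pow_succ, mul_assoc, hx, mul_zero]
  | succ j => rw [pow_succ, ← mul_assoc, mul_assoc, hy, mul_zero]

theorem mul_pow_mul_pow_eq_zero (hx : z * x = 0) (hy : z * y = 0) {i j : ℕ}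
    (hij : i ≠ 0 ∨ j ≠ 0) : z * (x ^ i * y ^ j) = 0 := by
  cases i with
  | zero =>
    obtain ⟨j, rfl⟩ := Nat.exists_eq_succ_of_ne_zero (hij.resolve_left (by simp))
    rw [pow_zero, one_mul, pow_succ', ← mul_assoc, hy, zero_mul]
  | succ i => rw [pow_succ', mul_assoc, ← mul_assoc, hx, zero_mul]

end Socle

namespace Module.Basis

variable {ι k A : Type*} [CommSemiring k] [Semiring A] [Algebra k A] (b : Basis ι k A)
  {i₀ : ι} {z : A}

theorem mul_eq_repr_smul (hb₀ : b i₀ = 1) (hz : ∀ i ≠ i₀, b i * z = 0) (a : A) :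
    a * z = b.repr a i₀ • z := by
  suffices LinearMap.mulRight k z = LinearMap.toSpanSingleton k A z ∘ₗ b.coord i₀ from
    LinearMap.congr_fun this a
  refine b.ext fun i => ?_
  rw [LinearMap.comp_apply, coord_apply, repr_self]
  by_cases hi : i = i₀
  · subst hi
    simp [hb₀]
  · simp [hz i hi, hi]

theorem mul_eq_repr_smul' (hb₀ : b i₀ = 1) (hz : ∀ i ≠ i₀, z * b i = 0) (a : A) :
    z * a = b.repr a i₀ • z := by
  suffices LinearMap.mulLeft k z = LinearMap.toSpanSingleton k A z ∘ₗ b.coord i₀ from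
    LinearMap.congr_fun this a
  refine b.ext fun i => ?_
  rw [LinearMap.comp_apply, coord_apply, repr_self]
  by_cases hi : i = i₀
  · subst hi
    simp [hb₀]
  · simp [hz i hi, hi]

end Module.Basis

theorem LinearMap.apply_ne_zero_of_mul_eq_smul {k A : Type*} [CommSemiring k] [Semiring A]
    [Algebra k A] {z : A} (hz : z ≠ 0) (hl : ∀ a : A, ∃ c : k, a * z = c • z)
    (hr : ∀ a : A, ∃ c : k, z * a = c • z) (s : A →ₗ[k] k)
    (hs : ∀ I : Ideal A, (∀ a ∈ I, ∀ c : A, a * c ∈ I) → (∀ a ∈ I, s a = 0) → I = ⊥) :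
    s z ≠ 0 := by
  intro hsz
  have hspan : Ideal.span {z} = ⊥ := by
    refine hs _ (fun a ha c => ?_) (fun a ha => ?_) <;>
      obtain ⟨d, rfl⟩ := Ideal.mem_span_singleton'.mp ha
    · obtain ⟨e, he⟩ := hr c
      rw [mul_assoc, he, mul_smul_comm]
      exact Submodule.smul_of_tower_mem _ e (Ideal.mul_mem_left _ d (Ideal.subset_span rfl))
    · obtain ⟨e, he⟩ := hl d
      rw [he, map_smul, hsz, smul_zero]
  exact hz (by simpa [hspan] using Ideal.subset_span (s := {z}) rfl)

section QuantumCompleteIntersection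

variable {k A : Type*} [CommSemiring k] [Semiring A] [Algebra k A] {x y : A} {q : k} {n : ℕ}

theorem fin_val_ne_zero_or_of_ne_zero {ij : Fin (n + 1) × Fin (n + 1)} (h : ij ≠ 0) :
    (ij.1 : ℕ) ≠ 0 ∨ (ij.2 : ℕ) ≠ 0 := by
  contrapose! h
  exact Prod.ext (Fin.ext h.1) (Fin.ext h.2)

theorem mul_pow_mul_pow_eq_repr_smul (hyx : y * x = q • (x * y)) (hx : x ^ (n + 1) = 0)
    (hy : y ^ (n + 1) = 0) (b : Module.Basis (Fin (n + 1) × Fin (n + 1)) k A)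
    (hb : ∀ ij : Fin (n + 1) × Fin (n + 1), b ij = x ^ (ij.1 : ℕ) * y ^ (ij.2 : ℕ)) (a : A) :
    a * (x ^ n * y ^ n) = b.repr a 0 • (x ^ n * y ^ n) := by
  have hxz : x * (x ^ n * y ^ n) = 0 := by rw [← mul_assoc, ← pow_succ', hx, zero_mul]
  have hyz : y * (x ^ n * y ^ n) = 0 := by
    rw [← mul_assoc, mul_pow_eq_smul_of_mul_eq_smul hyx, smul_mul_assoc, mul_assoc,
      ← pow_succ', hy, mul_zero, smul_zero]
  refine b.mul_eq_repr_smul (by rw [hb]; simp) (fun ij hij => ?_) a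
  rw [hb]
  exact pow_mul_pow_mul_eq_zero hxz hyz (fin_val_ne_zero_or_of_ne_zero hij)

theorem pow_mul_pow_mul_eq_repr_smul (hyx : y * x = q • (x * y)) (hx : x ^ (n + 1) = 0)
    (hy : y ^ (n + 1) = 0) (b : Module.Basis (Fin (n + 1) × Fin (n + 1)) k A)
    (hb : ∀ ij : Fin (n + 1) × Fin (n + 1), b ij = x ^ (ij.1 : ℕ) * y ^ (ij.2 : ℕ)) (a : A) :
    x ^ n * y ^ n * a = b.repr a 0 • (x ^ n * y ^ n) := by
  have hzx : x ^ n * y ^ n * x = 0 := by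
    rw [mul_assoc, pow_mul_eq_smul_of_mul_eq_smul hyx, mul_smul_comm, ← mul_assoc,
      ← pow_succ, hx, zero_mul, smul_zero]
  have hzy : x ^ n * y ^ n * y = 0 := by rw [mul_assoc, ← pow_succ, hy, mul_zero]
  refine b.mul_eq_repr_smul' (by rw [hb]; simp) (fun ij hij => ?_) a
  rw [hb]
  exact mul_pow_mul_pow_eq_zero hzx hzy (fin_val_ne_zero_or_of_ne_zero hij)

end QuantumCompleteIntersection

theorem symmetric_quantum_complete_intersection_order_dvd_general
    (k : Type*) [Field k] (p : ℕ) (q : k)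
    (A : Type*) [Ring A] [Algebra k A] (x y : A)
    (hx : x ^ p = 0) (hy : y ^ p = 0) (hyx : y * x = q • (x * y))
    (b : Module.Basis (Fin p × Fin p) k A)
    (hb : ∀ ij : Fin p × Fin p, b ij = x ^ (ij.1 : ℕ) * y ^ (ij.2 : ℕ))
    (hsym : ∃ s : A →ₗ[k] k, (∀ a b : A, s (a * b) = s (b * a)) ∧
      ∀ I : Ideal A, (∀ a ∈ I, ∀ c : A, a * c ∈ I) → (∀ a ∈ I, s a = 0) → I = ⊥) :
    q ^ (p - 1) = 1 ∧ orderOf q ∣ p - 1 := by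
  obtain ⟨s, hs, hsI⟩ := hsym
  obtain _ | n := p
  · simp
  have hz : x ^ n * y ^ n ≠ 0 := by simpa [hb] using b.ne_zero (Fin.last n, Fin.last n)
  have hsz : s (x ^ n * y ^ n) ≠ 0 := LinearMap.apply_ne_zero_of_mul_eq_smul hz
    (fun a => ⟨_, mul_pow_mul_pow_eq_repr_smul hyx hx hy b hb a⟩)
    (fun a => ⟨_, pow_mul_pow_mul_eq_repr_smul hyx hx hy b hb a⟩) s hsI
  have hq : q ^ n = 1 := (mul_eq_right₀ hsz).mp (s.apply_pow_mul_pow_eq_mul_self hyx hs n).symm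
  rw [Nat.add_sub_cancel]
  exact ⟨hq, orderOf_dvd_of_pow_eq_one hq⟩

/-- Remark: let `A = k⟨x,y⟩/(x^p, y^p, yx − q·xy)` for an arbitrary `q ∈ k^×`, over a
field `k` of odd prime characteristic `p`.  If `A` admits a `k`-linear form `s` with
`s(ab) = s(ba)` whose kernel contains no nonzero two-sided ideal (in particular, if `A` is
a symmetric algebra), then `q^{p−1} = 1`, i.e. the multiplicative order of `q` divides
`p − 1`. -/
theorem symmetric_quantum_complete_intersection_order_dvd
    (k : Type*) [Field k] (p : ℕ) (q : k)
    (hp : p.Prime) (hodd : Odd p) (hchar : CharP k p) (hq0 : q ≠ 0)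
    (A : Type*) [Ring A] [Algebra k A] (x y : A)
    (hx : x ^ p = 0) (hy : y ^ p = 0) (hyx : y * x = q • (x * y))
    (b : Module.Basis (Fin p × Fin p) k A)
    (hb : ∀ ij : Fin p × Fin p, b ij = x ^ (ij.1 : ℕ) * y ^ (ij.2 : ℕ))
    (hsym : ∃ s : A →ₗ[k] k, (∀ a b : A, s (a * b) = s (b * a)) ∧
      ∀ I : Ideal A, (∀ a ∈ I, ∀ c : A, a * c ∈ I) → (∀ a ∈ I, s a = 0) → I = ⊥) :
    q ^ (p - 1) = 1 ∧ orderOf q ∣ p - 1 :=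
  symmetric_quantum_complete_intersection_order_dvd_general k p q A x y hx hy hyx b hb hsym
end

section
/- With A the quantum complete intersection as below, the set {x^i y^j : 1 ≤ i,j ≤ p−1, and e does not divide i or e does not divide j} is a k-basis of the commutator space [A,A]; in particular dim_k [A,A] = (p−1)² − ((p−1)/e)², and [A,A] is contained in the two-sided ideal A·xy = xy·A. -/
/-!
From `y^j x^i = q^(ij) x^i y^j`, the commutator of two monomials is again a multiple of a monomial:
`[x^a y^c, x^d y^f] = (q^(dc) - q^(af)) x^(a+d) y^(c+f)`. By bilinearity these commutators span
`[A,A]`. The coefficient vanishes when `e` divides both `a+d` and `c+f`, and `x^(a+d) y^(c+f)`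
vanishes unless both exponents are `< p`, so `[A,A]` lies in the span of the monomials `x^i y^j`
with `1 ≤ i, j ≤ p-1` and `e ∤ i` or `e ∤ j`. Conversely such a monomial is a nonzero multiple of
`[y, x^i y^(j-1)]` (if `e ∤ i`) or of `[x, x^(i-1) y^j]` (if `e ∤ j`). Since these monomials are
part of a basis, they form a basis of `[A,A]`. Finally `m·xy` and `xy·m` are nonzero multiples of
each other for every monomial `m`, so `A·xy = xy·A`, and it contains every `x^i y^j` with
`i, j ≥ 1`.
-/

open Submodule Finset

section QCommuting

variable {R A : Type*} [CommSemiring R] [Semiring A] [Algebra R A] {q : R} {x y : A}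

theorem mul_pow_of_mul_eq_smul (hyx : y * x = q • (x * y)) (i : ℕ) :
    y * x ^ i = q ^ i • (x ^ i * y) := by
  induction i with
  | zero => simp
  | succ n ih =>
    calc y * x ^ (n + 1) = q • (x * (y * x ^ n)) := by
          rw [pow_succ', ← mul_assoc, hyx, smul_mul_assoc, mul_assoc]
    _ = q ^ (n + 1) • (x ^ (n + 1) * y) := by
          rw [ih, mul_smul_comm, smul_smul, ← mul_assoc, ← pow_succ', ← pow_succ']

theorem pow_mul_pow_of_mul_eq_smul (hyx : y * x = q • (x * y)) (i j : ℕ) :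
    y ^ j * x ^ i = q ^ (i * j) • (x ^ i * y ^ j) := by
  induction j with
  | zero => simp
  | succ n ih =>
    calc y ^ (n + 1) * x ^ i = q ^ i • ((y ^ n * x ^ i) * y) := by
          rw [pow_succ, mul_assoc, mul_pow_of_mul_eq_smul hyx, mul_smul_comm, ← mul_assoc]
    _ = q ^ (i * (n + 1)) • (x ^ i * y ^ (n + 1)) := by
          rw [ih, smul_mul_assoc, smul_smul, mul_assoc, ← pow_succ, ← pow_add, mul_add_one,
            add_comm]

theorem monomial_mul_monomial_of_mul_eq_smul (hyx : y * x = q • (x * y)) (a c d f : ℕ) :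
    (x ^ a * y ^ c) * (x ^ d * y ^ f) = q ^ (d * c) • (x ^ (a + d) * y ^ (c + f)) := by
  rw [mul_assoc, ← mul_assoc (y ^ c), pow_mul_pow_of_mul_eq_smul hyx, smul_mul_assoc,
    mul_smul_comm, pow_add, pow_add, mul_assoc, mul_assoc]

theorem monomial_mul_xy_of_mul_eq_smul (hyx : y * x = q • (x * y)) (i j : ℕ) :
    (x ^ i * y ^ j) * (x * y) = q ^ j • (x ^ (i + 1) * y ^ (j + 1)) := by
  simpa using monomial_mul_monomial_of_mul_eq_smul hyx i j 1 1

theorem xy_mul_monomial_of_mul_eq_smul (hyx : y * x = q • (x * y)) (i j : ℕ) :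
    (x * y) * (x ^ i * y ^ j) = q ^ i • (x ^ (i + 1) * y ^ (j + 1)) := by
  simpa [add_comm 1] using monomial_mul_monomial_of_mul_eq_smul hyx 1 1 i j

end QCommuting

theorem monomial_commutator_of_mul_eq_smul {R A : Type*} [CommRing R] [Ring A] [Algebra R A]
    {q : R} {x y : A} (hyx : y * x = q • (x * y)) (a c d f : ℕ) :
    (x ^ a * y ^ c) * (x ^ d * y ^ f) - (x ^ d * y ^ f) * (x ^ a * y ^ c) =
      (q ^ (d * c) - q ^ (a * f)) • (x ^ (a + d) * y ^ (c + f)) := by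
  rw [monomial_mul_monomial_of_mul_eq_smul hyx, monomial_mul_monomial_of_mul_eq_smul hyx,
    add_comm d, add_comm f, sub_smul]

theorem pow_mul_eq_pow_mul_of_pow_add_eq_one {M : Type*} [Monoid M] {q : M} {a c d f : ℕ}
    (had : q ^ (a + d) = 1) (hcf : q ^ (c + f) = 1) : q ^ (d * c) = q ^ (a * f) :=
  calc q ^ (d * c) = q ^ (d * c) * (q ^ (a + d)) ^ f := by rw [had, one_pow, mul_one]
  _ = q ^ (a * f) * (q ^ (c + f)) ^ d := by
        rw [← pow_mul, ← pow_mul, ← pow_add, ← pow_add]; ring_nf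
  _ = q ^ (a * f) := by rw [hcf, one_pow, mul_one]

section CommutatorSpan

variable (k A : Type*) [CommRing k] [Ring A] [Algebra k A]

def commutatorSpan : Submodule k A := span k {c | ∃ a b : A, c = a * b - b * a}

variable {k A}

theorem commutatorSpan_eq_span_image2 {s : Set A} (hs : span k s = ⊤) :
    commutatorSpan k A = span k (Set.image2 (fun a b => a * b - b * a) s s) := by
  refine le_antisymm (span_le.2 ?_) (span_mono ?_)
  · rintro _ ⟨a, b, rfl⟩
    have h := apply_mem_map₂ (LinearMap.mul k A - (LinearMap.mul k A).flip)
      (mem_top (x := a)) (mem_top (x := b))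
    rwa [← hs, map₂_span_span] at h
  · rintro _ ⟨a, -, b, -, rfl⟩
    exact ⟨a, b, rfl⟩

end CommutatorSpan

theorem Fin.card_filter_val (n : ℕ) (P : ℕ → Prop) [DecidablePred P] :
    #{i : Fin n | P i} = #{i ∈ range n | P i} := by
  rw [← Nat.Iio_eq_range, ← Fin.map_valEmbedding_univ, filter_map, card_map]
  rfl

theorem Fin.card_filter_val_pos (p : ℕ) : #{i : Fin p | 0 < (i : ℕ)} = p - 1 := by
  have h : ({i ∈ range p | 0 < i} : Finset ℕ) = Ioc 0 (p - 1) := by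
    ext i
    simp only [mem_filter, mem_range, mem_Ioc]
    omega
  rw [Fin.card_filter_val p (0 < ·), h, Nat.card_Ioc, Nat.sub_zero]

theorem Fin.card_filter_val_pos_dvd (p e : ℕ) :
    #{i : Fin p | 0 < (i : ℕ) ∧ e ∣ (i : ℕ)} = (p - 1) / e := by
  rw [Fin.card_filter_val p (fun i => 0 < i ∧ e ∣ i), ← Nat.Ioc_filter_dvd_card_eq_div]
  congr 1
  ext i
  simp only [mem_filter, mem_range, mem_Ioc]
  omega

def commutatorIndices (p e : ℕ) : Finset (Fin p × Fin p) :=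
  let pos : Finset (Fin p) := {i | 0 < (i : ℕ)}
  let posDvd : Finset (Fin p) := {i | 0 < (i : ℕ) ∧ e ∣ (i : ℕ)}
  pos ×ˢ pos \ posDvd ×ˢ posDvd

theorem card_commutatorIndices (p e : ℕ) :
    #(commutatorIndices p e) = (p - 1) ^ 2 - ((p - 1) / e) ^ 2 := by
  have hsub : ({i | 0 < (i : ℕ) ∧ e ∣ (i : ℕ)} : Finset (Fin p)) ⊆
      ({i | 0 < (i : ℕ)} : Finset (Fin p)) :=
    fun i hi => by simp only [mem_filter] at hi ⊢; exact ⟨hi.1, hi.2.1⟩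
  rw [commutatorIndices, card_sdiff_of_subset (product_subset_product hsub hsub), card_product,
    card_product, Fin.card_filter_val_pos, Fin.card_filter_val_pos_dvd, sq, sq]

section QuantumCompleteIntersection

variable {k A : Type*} [Field k] [Ring A] [Algebra k A] {q : k} {x y : A}

def commutatorMonomials (p e : ℕ) (x y : A) : Set A :=
  {a | ∃ i j : ℕ, 1 ≤ i ∧ i ≤ p - 1 ∧ 1 ≤ j ∧ j ≤ p - 1 ∧ (¬ e ∣ i ∨ ¬ e ∣ j) ∧
    a = x ^ i * y ^ j}

theorem monomial_mem_commutatorSpan (hyx : y * x = q • (x * y)) {a c d f : ℕ}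
    (hq : q ^ (d * c) ≠ q ^ (a * f)) : x ^ (a + d) * y ^ (c + f) ∈ commutatorSpan k A := by
  rw [← smul_mem_iff _ (sub_ne_zero.2 hq), ← monomial_commutator_of_mul_eq_smul hyx]
  exact subset_span ⟨_, _, rfl⟩

theorem commutatorMonomials_subset_commutatorSpan (hyx : y * x = q • (x * y)) (p : ℕ) :
    commutatorMonomials p (orderOf q) x y ⊆ commutatorSpan k A := by
  rintro _ ⟨i, j, hi, -, hj, -, hij, rfl⟩
  rcases hij with hi' | hj'
  · have h : q ^ (i * 1) ≠ q ^ (0 * (j - 1)) := by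
      simpa using mt orderOf_dvd_of_pow_eq_one hi'
    simpa [Nat.add_sub_cancel' hj] using monomial_mem_commutatorSpan hyx h
  · have h : q ^ ((i - 1) * 0) ≠ q ^ (1 * j) := by
      simpa [eq_comm] using mt orderOf_dvd_of_pow_eq_one hj'
    simpa [Nat.add_sub_cancel' hi] using monomial_mem_commutatorSpan hyx h

theorem monomial_commutator_mem_span_commutatorMonomials {p : ℕ} (hx : x ^ p = 0)
    (hy : y ^ p = 0) (hyx : y * x = q • (x * y)) (a c d f : ℕ) :
    (x ^ a * y ^ c) * (x ^ d * y ^ f) - (x ^ d * y ^ f) * (x ^ a * y ^ c) ∈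
      span k (commutatorMonomials p (orderOf q) x y) := by
  rw [monomial_commutator_of_mul_eq_smul hyx]
  by_cases hq : q ^ (d * c) = q ^ (a * f)
  · simp [hq]
  by_cases hxp : p ≤ a + d
  · simp [pow_eq_zero_of_le hxp hx]
  by_cases hyp : p ≤ c + f
  · simp [pow_eq_zero_of_le hyp hy]
  refine smul_mem _ _ (subset_span ⟨a + d, c + f, ?_, by omega, ?_, by omega, ?_, rfl⟩)
  · by_contra h; simp_all [show a = 0 by omega, show d = 0 by omega]
  · by_contra h; simp_all [show c = 0 by omega, show f = 0 by omega]
  · by_contra! h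
    exact hq (pow_mul_eq_pow_mul_of_pow_add_eq_one (orderOf_dvd_iff_pow_eq_one.1 h.1)
      (orderOf_dvd_iff_pow_eq_one.1 h.2))

theorem span_commutatorMonomials_eq_commutatorSpan {p : ℕ} (hx : x ^ p = 0) (hy : y ^ p = 0)
    (hyx : y * x = q • (x * y))
    (hspan : span k (Set.range fun ij : ℕ × ℕ => x ^ ij.1 * y ^ ij.2) = ⊤) :
    span k (commutatorMonomials p (orderOf q) x y) = commutatorSpan k A := by
  refine le_antisymm (span_le.2 (commutatorMonomials_subset_commutatorSpan hyx p)) ?_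
  rw [commutatorSpan_eq_span_image2 hspan, span_le]
  rintro _ ⟨_, ⟨⟨a, c⟩, rfl⟩, _, ⟨⟨d, f⟩, rfl⟩, rfl⟩
  exact monomial_commutator_mem_span_commutatorMonomials hx hy hyx a c d f

theorem commutatorMonomials_subset_range_mulRight (hq : q ≠ 0) (hyx : y * x = q • (x * y))
    (p e : ℕ) :
    commutatorMonomials p e x y ⊆ LinearMap.range (LinearMap.mulRight k (x * y)) := by
  rintro _ ⟨i, j, hi, -, hj, -, -, rfl⟩
  refine ⟨(q ^ (j - 1))⁻¹ • (x ^ (i - 1) * y ^ (j - 1)), ?_⟩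
  rw [LinearMap.mulRight_apply, smul_mul_assoc, monomial_mul_xy_of_mul_eq_smul hyx, smul_smul,
    inv_mul_cancel₀ (pow_ne_zero _ hq), one_smul, Nat.sub_add_cancel hi, Nat.sub_add_cancel hj]

theorem range_mulRight_eq_range_mulLeft (hq : q ≠ 0) (hyx : y * x = q • (x * y))
    (hspan : span k (Set.range fun ij : ℕ × ℕ => x ^ ij.1 * y ^ ij.2) = ⊤) :
    LinearMap.range (LinearMap.mulRight k (x * y)) =
      LinearMap.range (LinearMap.mulLeft k (x * y)) := by
  apply le_antisymm <;> rw [LinearMap.range_eq_map, ← hspan, map_span, span_le] <;>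
    rintro _ ⟨_, ⟨⟨i, j⟩, rfl⟩, rfl⟩
  · refine ⟨(q ^ j * (q ^ i)⁻¹) • (x ^ i * y ^ j), ?_⟩
    simp only [LinearMap.mulLeft_apply, LinearMap.mulRight_apply, mul_smul_comm,
      monomial_mul_xy_of_mul_eq_smul hyx, xy_mul_monomial_of_mul_eq_smul hyx, smul_smul,
      inv_mul_cancel_right₀ (pow_ne_zero _ hq)]
  · refine ⟨(q ^ i * (q ^ j)⁻¹) • (x ^ i * y ^ j), ?_⟩
    simp only [LinearMap.mulLeft_apply, LinearMap.mulRight_apply, smul_mul_assoc,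
      monomial_mul_xy_of_mul_eq_smul hyx, xy_mul_monomial_of_mul_eq_smul hyx, smul_smul,
      inv_mul_cancel_right₀ (pow_ne_zero _ hq)]

theorem commutatorMonomials_eq_image {p : ℕ} (e : ℕ) (b : Fin p × Fin p → A)
    (hb : ∀ ij : Fin p × Fin p, b ij = x ^ (ij.1 : ℕ) * y ^ (ij.2 : ℕ)) :
    commutatorMonomials p e x y = b '' commutatorIndices p e := by
  ext a
  simp only [commutatorMonomials, commutatorIndices, coe_sdiff, coe_product, coe_filter,
    mem_univ, true_and, Set.mem_image, Set.mem_sdiff, Set.mem_prod, Set.mem_ofPred_eq, hb]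
  constructor
  · rintro ⟨i, j, hi, hi', hj, hj', hij, rfl⟩
    exact ⟨(⟨i, by omega⟩, ⟨j, by omega⟩), ⟨⟨hi, hj⟩, by tauto⟩, rfl⟩
  · rintro ⟨⟨i, j⟩, ⟨⟨hi, hj⟩, hij⟩, rfl⟩
    exact ⟨i, j, hi, by omega, hj, by omega, by tauto, rfl⟩

end QuantumCompleteIntersection

theorem commutator_space_of_quantum_complete_intersection_general
    (k : Type*) [Field k] (p e : ℕ) (q : k)
    (hq : orderOf q = e) (he : 2 ≤ e)
    (A : Type*) [Ring A] [Algebra k A] (x y : A)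
    (hx : x ^ p = 0) (hy : y ^ p = 0) (hyx : y * x = q • (x * y))
    (b : Module.Basis (Fin p × Fin p) k A)
    (hb : ∀ ij : Fin p × Fin p, b ij = x ^ (ij.1 : ℕ) * y ^ (ij.2 : ℕ)) :
    (LinearIndependent k (fun a : ↥{a : A | ∃ i j : ℕ, 1 ≤ i ∧ i ≤ p - 1 ∧ 1 ≤ j ∧
        j ≤ p - 1 ∧ (¬ e ∣ i ∨ ¬ e ∣ j) ∧ a = x ^ i * y ^ j} => (a : A)) ∧
      Submodule.span k {a : A | ∃ i j : ℕ, 1 ≤ i ∧ i ≤ p - 1 ∧ 1 ≤ j ∧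
        j ≤ p - 1 ∧ (¬ e ∣ i ∨ ¬ e ∣ j) ∧ a = x ^ i * y ^ j} =
        Submodule.span k {c : A | ∃ a b : A, c = a * b - b * a} ∧
      Module.finrank k ↥(Submodule.span k {c : A | ∃ a b : A, c = a * b - b * a}) =
        (p - 1) ^ 2 - ((p - 1) / e) ^ 2) ∧
    {c : A | ∃ a : A, c = a * (x * y)} = {c : A | ∃ a : A, c = (x * y) * a} ∧
    ∀ c ∈ Submodule.span k {c : A | ∃ a b : A, c = a * b - b * a},
      ∃ a : A, c = a * (x * y) := by
  subst hq
  have hq0 : q ≠ 0 :=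
    ne_zero_pow (n := orderOf q) (by omega) (by rw [pow_orderOf_eq_one]; exact one_ne_zero)
  have hspan : span k (Set.range fun ij : ℕ × ℕ => x ^ ij.1 * y ^ ij.2) = ⊤ :=
    eq_top_iff.2 <| b.span_eq.ge.trans <| span_mono <| by
      rintro _ ⟨ij, rfl⟩
      exact ⟨(ij.1, ij.2), (hb ij).symm⟩
  have hS := commutatorMonomials_eq_image (orderOf q) b hb
  have hC := span_commutatorMonomials_eq_commutatorSpan hx hy hyx hspan
  have hindep : LinearIndepOn k id (b '' commutatorIndices p (orderOf q)) :=
    (b.linearIndependent.linearIndepOn _).id_image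
  have hideal := range_mulRight_eq_range_mulLeft hq0 hyx hspan
  refine ⟨⟨?_, hC, ?_⟩, ?_, fun c hc => ?_⟩
  · change LinearIndepOn k id (commutatorMonomials p (orderOf q) x y)
    rwa [hS]
  · classical
    change Module.finrank k (commutatorSpan k A) = _
    rw [← hC, hS, ← coe_image, finrank_span_finset_eq_card (by rwa [coe_image]),
      card_image_of_injective _ b.injective, card_commutatorIndices]
  · ext c
    simp only [SetLike.ext_iff, LinearMap.mem_range, LinearMap.mulRight_apply,
      LinearMap.mulLeft_apply] at hideal
    exact (exists_congr fun a => eq_comm).trans ((hideal c).trans (exists_congr fun a => eq_comm))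
  · change c ∈ commutatorSpan k A at hc
    rw [← hC] at hc
    obtain ⟨a, rfl⟩ := span_le.2 (commutatorMonomials_subset_range_mulRight hq0 hyx _ _) hc
    exact ⟨a, rfl⟩

/-- Lemma (the commutator space of the quantum complete intersection): the monomials
`x^i y^j` with `1 ≤ i, j ≤ p−1` and `e ∤ i` or `e ∤ j` form a `k`-basis of `[A,A]`, so
`dim_k [A,A] = (p−1)² − ((p−1)/e)²`; moreover the left ideal `A·xy` coincides with the
right ideal `xy·A` and `[A,A]` is contained in this ideal. -/
theorem commutator_space_of_quantum_complete_intersection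
    (k : Type*) [Field k] (p e : ℕ) (q : k)
    (hp : p.Prime) (hodd : Odd p) (hchar : CharP k p)
    (hq : orderOf q = e) (he : 2 ≤ e) (hediv : e ∣ p - 1)
    (A : Type*) [Ring A] [Algebra k A] (x y : A)
    (hx : x ^ p = 0) (hy : y ^ p = 0) (hyx : y * x = q • (x * y))
    (b : Module.Basis (Fin p × Fin p) k A)
    (hb : ∀ ij : Fin p × Fin p, b ij = x ^ (ij.1 : ℕ) * y ^ (ij.2 : ℕ)) :
    (LinearIndependent k (fun a : ↥{a : A | ∃ i j : ℕ, 1 ≤ i ∧ i ≤ p - 1 ∧ 1 ≤ j ∧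
        j ≤ p - 1 ∧ (¬ e ∣ i ∨ ¬ e ∣ j) ∧ a = x ^ i * y ^ j} => (a : A)) ∧
      Submodule.span k {a : A | ∃ i j : ℕ, 1 ≤ i ∧ i ≤ p - 1 ∧ 1 ≤ j ∧
        j ≤ p - 1 ∧ (¬ e ∣ i ∨ ¬ e ∣ j) ∧ a = x ^ i * y ^ j} =
        Submodule.span k {c : A | ∃ a b : A, c = a * b - b * a} ∧
      Module.finrank k ↥(Submodule.span k {c : A | ∃ a b : A, c = a * b - b * a}) =
        (p - 1) ^ 2 - ((p - 1) / e) ^ 2) ∧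
    {c : A | ∃ a : A, c = a * (x * y)} = {c : A | ∃ a : A, c = (x * y) * a} ∧
    ∀ c ∈ Submodule.span k {c : A | ∃ a b : A, c = a * b - b * a},
      ∃ a : A, c = a * (x * y) :=
  commutator_space_of_quantum_complete_intersection_general k p e q hq he A x y hx hy hyx b hb
end
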